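/- arXiv:math/0402282 — 9 statements merged into one kernel-verified Lean document; each statement's English description precedes it below -/
import Mathlib

section
/- Let V = ℝ^{2s} with basis U_1,...,U_s,T_1,...,T_s and let B be the 4-tensor with nonzero components (up to the ℤ₂ curvature symmetries) B(U_i,U_j,U_k,T_l) = δ_{il}δ_{jk} - δ_{ik}δ_{jl}. If ξ₁, ξ₂ ∈ V are nonzero vectors such that B(ξ₁,ξ₂,η₁,η₂) = 0 and B(ξ₁,η₁,η₂,ξ₂) = 0 for all η₁,η₂ ∈ V, then ξ₁ and ξ₂ both lie in Span{T_1,...,T_s}. -/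
/-- `ℝ^{2s}` with coordinates `(u, t)`: `x.1` are the `U`-coordinates, `x.2` the `T`-coordinates. -/
abbrev VUT (s : ℕ) := (Fin s → ℝ) × (Fin s → ℝ)

/-- The Euclidean dot product on `Fin s → ℝ`. -/
def dotp {s : ℕ} (x y : Fin s → ℝ) : ℝ := ∑ i, x i * y i

/-- The multilinear extension (respecting the curvature symmetries) of the algebraic
curvature tensor whose only nonzero components up to the `ℤ₂` symmetries are
`B(U_i,U_j,U_k,T_l) = δ_{il}δ_{jk} - δ_{ik}δ_{jl}`. -/
def B2 {s : ℕ} (a b c d : VUT s) : ℝ :=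
    (dotp a.1 d.2 * dotp b.1 c.1 - dotp a.1 c.1 * dotp b.1 d.2)
  - (dotp a.1 c.2 * dotp b.1 d.1 - dotp a.1 d.1 * dotp b.1 c.2)
  + (dotp c.1 b.2 * dotp d.1 a.1 - dotp c.1 a.1 * dotp d.1 b.2)
  - (dotp c.1 a.2 * dotp d.1 b.1 - dotp c.1 b.1 * dotp d.1 a.2)

/-!
Write `ξ₁ = (a, p)` and `ξ₂ = (b, q)` in `U`/`T` coordinates. Evaluating `B(ξ₁, η₁, η₂, ξ₂) = 0` on
`(η₁, η₂) = (U_i, T_j)` and `(U_i, U_j)` shows that the matrices `(a_j b_i)` and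
`(a_j q_i + p_j b_i)` are scalar multiples of the identity. In dimension `s ≥ 2` a matrix of rank
at most one is a multiple of the identity only if it vanishes, so `a = 0` or `b = 0` from the first
matrix; the second matrix then has rank at most one as well, and since `ξ₁, ξ₂ ≠ 0` this forces
`a = b = 0`.
-/

lemma eq_zero_or_eq_zero_of_mul_eq_ite {R ι : Type*} [CommRing R] [NoZeroDivisors R]
    [Nontrivial ι] [DecidableEq ι] {x y : ι → R} {c : R}
    (h : ∀ i j, x j * y i = if i = j then c else 0) : x = 0 ∨ y = 0 := by
  obtain ⟨i, j, hij⟩ := exists_pair_ne ι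
  have hc : c = 0 := by
    have hcc : c * c = 0 := calc
      c * c = (x i * y i) * (x j * y j) := by simp only [h, if_pos]
      _ = (x j * y i) * (x i * y j) := by ring
      _ = 0 := by simp only [h, if_neg hij, zero_mul]
    exact mul_self_eq_zero.mp hcc
  have hxy : ∀ i j, x j * y i = 0 := fun i j => by simp only [h, hc, ite_self]
  by_contra! hne
  obtain ⟨k, hk⟩ := Function.ne_iff.mp hne.1
  obtain ⟨l, hl⟩ := Function.ne_iff.mp hne.2
  exact mul_ne_zero hk hl (hxy l k)

section

variable {s : ℕ}

lemma dotp_single (x : Fin s → ℝ) (i : Fin s) : dotp x (Pi.single i 1) = x i := by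
  simp [dotp, Pi.single_apply]

lemma single_dotp (x : Fin s → ℝ) (i : Fin s) : dotp (Pi.single i 1) x = x i := by
  simp [dotp, Pi.single_apply]

lemma dotp_zero (x : Fin s → ℝ) : dotp x 0 = 0 := by simp [dotp]

lemma zero_dotp (x : Fin s → ℝ) : dotp 0 x = 0 := by simp [dotp]

lemma B2_single_zero_zero_single (ξ ζ : VUT s) (i j : Fin s) :
    B2 ξ (Pi.single i 1, 0) (0, Pi.single j 1) ζ =
      (if i = j then dotp ξ.1 ζ.1 else 0) - ξ.1 j * ζ.1 i := by
  rcases eq_or_ne i j with rfl | hij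
  · simp only [B2, dotp_single, single_dotp, dotp_zero, zero_dotp, Pi.zero_apply, Pi.single_eq_same,
      if_pos]
    ring
  · simp only [B2, dotp_single, single_dotp, dotp_zero, zero_dotp, Pi.zero_apply,
      Pi.single_eq_of_ne hij.symm, if_neg hij]
    ring

lemma B2_single_zero_single_zero (ξ ζ : VUT s) (i j : Fin s) :
    B2 ξ (Pi.single i 1, 0) (Pi.single j 1, 0) ζ =
      (if i = j then dotp ξ.1 ζ.2 + dotp ζ.1 ξ.2 else 0) - (ξ.1 j * ζ.2 i + ξ.2 j * ζ.1 i) := by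
  rcases eq_or_ne i j with rfl | hij
  · simp only [B2, dotp_single, single_dotp, dotp_zero, Pi.single_eq_same, if_pos]
    ring
  · simp only [B2, dotp_single, single_dotp, dotp_zero, Pi.single_eq_of_ne hij,
      Pi.single_eq_of_ne hij.symm, if_neg hij]
    ring

lemma mem_span_T_of_fst_eq_zero {x : VUT s} (hx : x.1 = 0) :
    x ∈ Submodule.span ℝ (Set.range fun i : Fin s => ((0, Pi.single i 1) : VUT s)) := by
  have hrange : (Set.range fun i : Fin s => ((0, Pi.single i 1) : VUT s)) =
      LinearMap.inr ℝ (Fin s → ℝ) (Fin s → ℝ) '' Set.range (Pi.basisFun ℝ (Fin s)) := by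
    rw [← Set.range_comp]
    congr 1
    funext i
    simp
  rw [hrange, ← Submodule.map_span, (Pi.basisFun ℝ (Fin s)).span_eq, Submodule.map_top]
  exact ⟨x.2, Prod.ext hx.symm rfl⟩

end

theorem stmt2_general (s : ℕ) (hs : 2 ≤ s) (ξ₁ ξ₂ : VUT s) (h1 : ξ₁ ≠ 0) (h2 : ξ₂ ≠ 0)
    (hB' : ∀ η₁ η₂ : VUT s, B2 ξ₁ η₁ η₂ ξ₂ = 0) :
    ξ₁ ∈ Submodule.span ℝ (Set.range fun i : Fin s => ((0, Pi.single i 1) : VUT s)) ∧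
    ξ₂ ∈ Submodule.span ℝ (Set.range fun i : Fin s => ((0, Pi.single i 1) : VUT s)) := by
  have : Nontrivial (Fin s) := Fin.nontrivial_iff_two_le.mpr hs
  obtain ⟨a, p⟩ := ξ₁
  obtain ⟨b, q⟩ := ξ₂
  have hT : ∀ i j, a j * b i = if i = j then dotp a b else 0 := fun i j =>
    (sub_eq_zero.mp ((B2_single_zero_zero_single _ _ i j).symm.trans (hB' _ _))).symm
  have hR : ∀ i j, a j * q i + p j * b i = if i = j then dotp a q + dotp b p else 0 := fun i j =>
    (sub_eq_zero.mp ((B2_single_zero_single_zero _ _ i j).symm.trans (hB' _ _))).symm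
  have hab : a = 0 ∧ b = 0 := by
    rcases eq_zero_or_eq_zero_of_mul_eq_ite hT with rfl | rfl
    · have hpb : p = 0 ∨ b = 0 := eq_zero_or_eq_zero_of_mul_eq_ite fun i j => by
        simpa only [Pi.zero_apply, zero_mul, zero_add] using hR i j
      exact ⟨rfl, hpb.resolve_left (by rintro rfl; exact h1 rfl)⟩
    · have haq : a = 0 ∨ q = 0 := eq_zero_or_eq_zero_of_mul_eq_ite fun i j => by
        simpa only [Pi.zero_apply, mul_zero, add_zero] using hR i j
      exact ⟨haq.resolve_right (by rintro rfl; exact h2 rfl), rfl⟩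
  exact ⟨mem_span_T_of_fst_eq_zero hab.1, mem_span_T_of_fst_eq_zero hab.2⟩

/-- Lemma 4.2 (1): if `ξ₁, ξ₂ ≠ 0`, `B(ξ₁,ξ₂,·,·) ≡ 0` and `B(ξ₁,·,·,ξ₂) ≡ 0`, then both
`ξ₁` and `ξ₂` lie in `Span{T_1,...,T_s}`. -/
theorem stmt2 (s : ℕ) (hs : 2 ≤ s) (ξ₁ ξ₂ : VUT s) (h1 : ξ₁ ≠ 0) (h2 : ξ₂ ≠ 0)
    (hB : ∀ η₁ η₂ : VUT s, B2 ξ₁ ξ₂ η₁ η₂ = 0)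
    (hB' : ∀ η₁ η₂ : VUT s, B2 ξ₁ η₁ η₂ ξ₂ = 0) :
    ξ₁ ∈ Submodule.span ℝ (Set.range fun i : Fin s => ((0, Pi.single i 1) : VUT s)) ∧
    ξ₂ ∈ Submodule.span ℝ (Set.range fun i : Fin s => ((0, Pi.single i 1) : VUT s)) :=
  stmt2_general s hs ξ₁ ξ₂ h1 h2 hB'
end

section
/- Let V be a real vector space of dimension at least 3 and let φ₁, φ₂ be symmetric positive definite bilinear forms on V. Define R(φ)(x,y,z,w) := φ(x,w)φ(y,z) - φ(x,z)φ(y,w). If R(φ₁) = R(φ₂) as 4-tensors, then φ₁ = φ₂. -/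
/-!
Fix `x ≠ 0`. As `dim V ≥ 3`, there is `y ≠ 0` orthogonal to `x` for both forms, and then `z ≠ 0`
which is `φ₁`-orthogonal to `x` and `y`. Evaluating `R(φ₁) = R(φ₂)` on these vectors shows that `z`
is `φ₂`-orthogonal to `x` and `y` too, and that the diagonal values `αᵤ = φ₁(u, u)`,
`aᵤ = φ₂(u, u)` satisfy `αᵤ αᵥ = aᵤ aᵥ` for any two distinct `u, v` among `x, y, z`. Hence
`α_x² = a_x²`, so the forms agree on the diagonal, and by polarization they are equal.
-/

universe u v

theorem exists_ne_zero_map_eq_zero_of_three_le_rank {K : Type u} {V : Type v} [Field K]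
    [AddCommGroup V] [Module K V] (hV : 3 ≤ Module.rank K V) (f g : Module.Dual K V) :
    ∃ z ≠ 0, f z = 0 ∧ g z = 0 := by
  have hrange : Module.rank K (LinearMap.range (f.prod g)) ≤ 2 :=
    (Submodule.rank_le _).trans (by simp [rank_prod]; norm_num)
  have hker : LinearMap.ker (f.prod g) ≠ ⊥ := by
    intro h
    have hsum := LinearMap.lift_rank_range_add_rank_ker (f.prod g)
    rw [h, rank_bot, Cardinal.lift_zero, add_zero] at hsum
    have h3 : Cardinal.lift.{u} (3 : Cardinal.{v}) ≤ _ := Cardinal.lift_le.mpr hV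
    have h2 : Cardinal.lift.{v} _ ≤ Cardinal.lift.{v} (2 : Cardinal.{u}) :=
      Cardinal.lift_le.mpr hrange
    rw [← hsum] at h3
    have := h3.trans h2
    norm_num at this
  obtain ⟨z, hz, hz0⟩ := (Submodule.ne_bot_iff _).mp hker
  exact ⟨z, hz0, by simpa [LinearMap.ker_prod] using hz⟩

theorem eq_of_pairwise_mul_eq {K : Type*} [Field K] [LinearOrder K] [IsStrictOrderedRing K]
    {α β γ a b c : K} (hα : 0 ≤ α) (ha : 0 ≤ a) (hb : b ≠ 0) (hc : c ≠ 0)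
    (hab : α * β = a * b) (hac : α * γ = a * c) (hbc : β * γ = b * c) : α = a := by
  have hsq : α ^ 2 * (b * c) = a ^ 2 * (b * c) := by
    linear_combination (α * β) * hac + (a * c) * hab - α ^ 2 * hbc
  exact (sq_eq_sq₀ hα ha).mp (mul_right_cancel₀ (mul_ne_zero hb hc) hsq)

section CurvatureTensor

variable {R M : Type*} [CommRing R] [AddCommGroup M] [Module R M]

def curvatureTensor (φ : LinearMap.BilinForm R M) (x y z w : M) : R :=
  φ x w * φ y z - φ x z * φ y w

variable {φ₁ φ₂ : LinearMap.BilinForm R M}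

theorem mul_apply_self_eq_of_curvatureTensor_eq
    (hR : ∀ x y z w, curvatureTensor φ₁ x y z w = curvatureTensor φ₂ x y z w) {x y : M}
    (h₁ : φ₁ x y = 0) (h₂ : φ₂ x y = 0) : φ₁ x x * φ₁ y y = φ₂ x x * φ₂ y y := by
  simpa [curvatureTensor, h₁, h₂] using hR x y y x

theorem mul_apply_eq_zero_of_curvatureTensor_eq
    (hR : ∀ x y z w, curvatureTensor φ₁ x y z w = curvatureTensor φ₂ x y z w) {x y z : M}
    (hyx₁ : φ₁ y x = 0) (hyx₂ : φ₂ y x = 0) (hyz₁ : φ₁ y z = 0) : φ₂ x x * φ₂ y z = 0 := by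
  simpa [curvatureTensor, hyx₁, hyx₂, hyz₁, eq_comm] using hR x y z x

end CurvatureTensor

theorem apply_self_eq_of_curvatureTensor_eq {K V : Type*} [Field K] [LinearOrder K]
    [IsStrictOrderedRing K] [AddCommGroup V] [Module K V] (hV : 3 ≤ Module.rank K V)
    {φ₁ φ₂ : LinearMap.BilinForm K V} (hsym₁ : φ₁.IsSymm) (hsym₂ : φ₂.IsSymm)
    (hpd₁ : ∀ x, x ≠ 0 → 0 < φ₁ x x) (hpd₂ : ∀ x, x ≠ 0 → 0 < φ₂ x x)
    (hR : ∀ x y z w, curvatureTensor φ₁ x y z w = curvatureTensor φ₂ x y z w) (x : V) :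
    φ₁ x x = φ₂ x x := by
  rcases eq_or_ne x 0 with rfl | hx
  · simp
  obtain ⟨y, hy, hxy₁, hxy₂⟩ := exists_ne_zero_map_eq_zero_of_three_le_rank hV (φ₁ x) (φ₂ x)
  obtain ⟨z, hz, hxz₁, hyz₁⟩ := exists_ne_zero_map_eq_zero_of_three_le_rank hV (φ₁ x) (φ₁ y)
  have hxz₂ : φ₂ x z = 0 :=
    (mul_eq_zero.mp (mul_apply_eq_zero_of_curvatureTensor_eq hR hxy₁ hxy₂ hxz₁)).resolve_left
      (hpd₂ y hy).ne'
  have hyz₂ : φ₂ y z = 0 :=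
    (mul_eq_zero.mp (mul_apply_eq_zero_of_curvatureTensor_eq hR
      (hsym₁.eq y x ▸ hxy₁) (hsym₂.eq y x ▸ hxy₂) hyz₁)).resolve_left (hpd₂ x hx).ne'
  exact eq_of_pairwise_mul_eq (hpd₁ x hx).le (hpd₂ x hx).le (hpd₂ y hy).ne' (hpd₂ z hz).ne'
    (mul_apply_self_eq_of_curvatureTensor_eq hR hxy₁ hxy₂)
    (mul_apply_self_eq_of_curvatureTensor_eq hR hxz₁ hxz₂)
    (mul_apply_self_eq_of_curvatureTensor_eq hR hyz₁ hyz₂)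

/-- Lemma 5.1: two symmetric positive definite bilinear forms on a real vector space of
dimension at least 3 inducing the same algebraic curvature tensor
`R(φ)(x,y,z,w) = φ(x,w)φ(y,z) - φ(x,z)φ(y,w)` are equal. -/
theorem stmt4 (V : Type*) [AddCommGroup V] [Module ℝ V]
    (hdim : 3 ≤ Module.rank ℝ V)
    (φ₁ φ₂ : V →ₗ[ℝ] V →ₗ[ℝ] ℝ)
    (hsym₁ : ∀ x y, φ₁ x y = φ₁ y x) (hsym₂ : ∀ x y, φ₂ x y = φ₂ y x)
    (hpd₁ : ∀ x, x ≠ 0 → 0 < φ₁ x x) (hpd₂ : ∀ x, x ≠ 0 → 0 < φ₂ x x)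
    (hR : ∀ x y z w, φ₁ x w * φ₁ y z - φ₁ x z * φ₁ y w
                   = φ₂ x w * φ₂ y z - φ₂ x z * φ₂ y w) :
    φ₁ = φ₂ :=
  LinearMap.BilinForm.ext_of_isSymm ⟨hsym₁⟩ ⟨hsym₂⟩
    (apply_self_eq_of_curvatureTensor_eq hdim ⟨hsym₁⟩ ⟨hsym₂⟩ hpd₁ hpd₂ hR)
end

section
/- Consider the metric g on ℝ^{2p} with coordinates (x_1,...,x_p,y_1,...,y_p) defined by g(∂_i^x,∂_j^x) = ∂_i f · ∂_j f and g(∂_i^x,∂_i^y) = 1 (other components zero), for f a smooth function of (x_1,...,x_p). Then the only nonzero components of the curvature tensor are R(∂_i^x,∂_j^x,∂_k^x,∂_l^x) = H_{il}H_{jk} - H_{ik}H_{jl}, where H_{ij} = ∂_i∂_j f is the Hessian of f. -/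
section CoordinateGeometry

variable {ι : Type*} [Fintype ι] [DecidableEq ι]

/-- The partial derivative `∂_a h` of a function `h` on `ℝ^ι`. -/
noncomputable def pd (a : ι) (h : (ι → ℝ) → ℝ) (z : ι → ℝ) : ℝ :=
  fderiv ℝ h z (Pi.single a 1)

/-- The Christoffel symbol of the first kind
`Γ_{abc} = (∂_a g_{bc} + ∂_b g_{ac} - ∂_c g_{ab})/2`. -/
noncomputable def christoffelFst (g : (ι → ℝ) → Matrix ι ι ℝ) (a b c : ι) (z : ι → ℝ) : ℝ :=
  (pd a (fun w => g w b c) z + pd b (fun w => g w a c) z - pd c (fun w => g w a b) z) / 2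

/-- The Christoffel symbol of the second kind `Γ_{ab}^c = Σ_d g^{cd} Γ_{abd}`. -/
noncomputable def christoffelSnd (g : (ι → ℝ) → Matrix ι ι ℝ) (a b c : ι) (z : ι → ℝ) : ℝ :=
  ∑ d, (g z)⁻¹ c d * christoffelFst g a b d z

/-- The curvature operator components: `curvU g a b c e` is the `e`-component of
`R(∂_a,∂_b)∂_c = (∇_{∂_a}∇_{∂_b} - ∇_{∂_b}∇_{∂_a})∂_c`. -/
noncomputable def curvU (g : (ι → ℝ) → Matrix ι ι ℝ) (a b c e : ι) (z : ι → ℝ) : ℝ :=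
  pd a (christoffelSnd g b c e) z - pd b (christoffelSnd g a c e) z
    + ∑ f, (christoffelSnd g b c f z * christoffelSnd g a f e z
          - christoffelSnd g a c f z * christoffelSnd g b f e z)

/-- The Riemann curvature tensor `R(∂_a,∂_b,∂_c,∂_d) = g(R(∂_a,∂_b)∂_c, ∂_d)`. -/
noncomputable def curv (g : (ι → ℝ) → Matrix ι ι ℝ) (a b c d : ι) (z : ι → ℝ) : ℝ :=
  ∑ e, curvU g a b c e z * g z e d

/-- The covariant derivative `∇R(∂_a,∂_b,∂_c,∂_d;∂_e)` of the curvature tensor. -/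
noncomputable def curvCov (g : (ι → ℝ) → Matrix ι ι ℝ) (a b c d e : ι) (z : ι → ℝ) : ℝ :=
  pd e (curv g a b c d) z
  - ∑ f, christoffelSnd g e a f z * curv g f b c d z
  - ∑ f, christoffelSnd g e b f z * curv g a f c d z
  - ∑ f, christoffelSnd g e c f z * curv g a b f d z
  - ∑ f, christoffelSnd g e d f z * curv g a b c f z

end CoordinateGeometry

/-- The metric `g_{1,p,f}` on `ℝ^{2p}` (with `Sum.inl i` the coordinate `x_i` and
`Sum.inr i` the coordinate `y_i`): `g(∂_i^x,∂_j^x) = ∂_i f · ∂_j f`, `g(∂_i^x,∂_i^y) = 1`. -/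
noncomputable def metric1 (p : ℕ) (f : (Fin p → ℝ) → ℝ) :
    ((Fin p ⊕ Fin p) → ℝ) → Matrix (Fin p ⊕ Fin p) (Fin p ⊕ Fin p) ℝ :=
  fun z => Matrix.of fun a b =>
    match a, b with
    | Sum.inl i, Sum.inl j =>
        pd i f (fun k => z (Sum.inl k)) * pd j f (fun k => z (Sum.inl k))
    | Sum.inl i, Sum.inr j => if i = j then 1 else 0
    | Sum.inr i, Sum.inl j => if i = j then 1 else 0
    | Sum.inr _, Sum.inr _ => 0

/-!
In block form `g = [[∇f ∇fᵀ, I], [I, 0]]` and `g⁻¹ = [[0, I], [I, -∇f ∇fᵀ]]`, so the only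
nonzero Christoffel symbols are `Γ_{x_i x_j}^{y_m} = H_{ij} ∂_m f`. A nonzero symbol thus has its
upper index in `y`, while every symbol with a lower `y` index vanishes; hence all quadratic terms
of the curvature vanish and `R(∂_i,∂_j)∂_k = Σ_m (∂_i(H_{jk} ∂_m f) - ∂_j(H_{ik} ∂_m f)) ∂^y_m`.
The third derivatives cancel by symmetry, leaving `H_{im} H_{jk} - H_{ik} H_{jm}`, and lowering
the index with `g(∂^y_m, ∂^x_l) = δ_{ml}` gives the formula. Components with a `y` index vanish:
nothing depends on `y`, and `R(∂_a,∂_b)∂_c` always points in the `y` directions, which are null.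
-/

open Sum

section PartialDerivative

variable {ι : Type*} [DecidableEq ι]

lemma pd_const (a : ι) (c : ℝ) (z : ι → ℝ) : pd a (fun _ => c) z = 0 := by
  simp [pd]

variable [Fintype ι]

lemma pd_mul {h₁ h₂ : (ι → ℝ) → ℝ} (a : ι) {z : ι → ℝ}
    (hh₁ : DifferentiableAt ℝ h₁ z) (hh₂ : DifferentiableAt ℝ h₂ z) :
    pd a (fun w => h₁ w * h₂ w) z = pd a h₁ z * h₂ z + h₁ z * pd a h₂ z := by
  simp only [pd, fderiv_fun_mul hh₁ hh₂, add_apply, smul_apply, smul_eq_mul]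
  ring

lemma contDiff_pd {h : (ι → ℝ) → ℝ} (hh : ContDiff ℝ (⊤ : ℕ∞) h) (a : ι) :
    ContDiff ℝ (⊤ : ℕ∞) (pd a h) :=
  (hh.fderiv_right (by exact_mod_cast le_top)).clm_apply contDiff_const

lemma pd_pd_eq_fderiv_fderiv {h : (ι → ℝ) → ℝ} {z : ι → ℝ}
    (hh : DifferentiableAt ℝ (fderiv ℝ h) z) (a b : ι) :
    pd a (pd b h) z = fderiv ℝ (fderiv ℝ h) z (Pi.single a 1) (Pi.single b 1) := by
  change fderiv ℝ (fun w => fderiv ℝ h w (Pi.single b 1)) z (Pi.single a 1) = _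
  simp [fderiv_clm_apply hh (differentiableAt_const _)]

lemma pd_comm {h : (ι → ℝ) → ℝ} (hh : ContDiff ℝ 2 h) (a b : ι) (z : ι → ℝ) :
    pd a (pd b h) z = pd b (pd a h) z := by
  have hd : DifferentiableAt ℝ (fderiv ℝ h) z :=
    (hh.fderiv_right (m := 1) le_rfl).differentiable one_ne_zero z
  rw [pd_pd_eq_fderiv_fderiv hd, pd_pd_eq_fderiv_fderiv hd,
    hh.contDiffAt.isSymmSndFDerivAt (by simp)]

end PartialDerivative

section LeftSummand

variable {ι κ : Type*} [Fintype ι] [Fintype κ] [DecidableEq ι] [DecidableEq κ]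

lemma pd_comp_inl {h : (ι → ℝ) → ℝ} {z : ι ⊕ κ → ℝ} (hh : DifferentiableAt ℝ h (z ∘ inl))
    (a : ι ⊕ κ) :
    pd a (fun w => h (w ∘ inl)) z = fderiv ℝ h (z ∘ inl) ((Pi.single a 1 : ι ⊕ κ → ℝ) ∘ inl) := by
  let restrict : (ι ⊕ κ → ℝ) →L[ℝ] (ι → ℝ) := .pi fun k => .proj (inl k)
  change fderiv ℝ (h ∘ restrict) z _ = _
  rw [fderiv_comp z hh restrict.differentiableAt, restrict.fderiv]
  rfl

lemma pd_inl_comp_inl {h : (ι → ℝ) → ℝ} {z : ι ⊕ κ → ℝ} (hh : DifferentiableAt ℝ h (z ∘ inl))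
    (i : ι) : pd (inl i) (fun w => h (w ∘ inl)) z = pd i h (z ∘ inl) := by
  rw [pd_comp_inl hh, pd]
  congr 1
  funext k
  simp [Pi.single_apply]

lemma pd_inr_comp_inl {h : (ι → ℝ) → ℝ} {z : ι ⊕ κ → ℝ} (hh : DifferentiableAt ℝ h (z ∘ inl))
    (j : κ) : pd (inr j) (fun w => h (w ∘ inl)) z = 0 := by
  rw [pd_comp_inl hh]
  convert map_zero (fderiv ℝ h (z ∘ inl))
  funext k
  simp

end LeftSummand

section Metric1

variable {p : ℕ} {f : (Fin p → ℝ) → ℝ}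

lemma pd_metric1_inl_inl (hf : ContDiff ℝ (⊤ : ℕ∞) f) (i j k : Fin p) (z : Fin p ⊕ Fin p → ℝ) :
    pd (inl k) (fun w => metric1 p f w (inl i) (inl j)) z =
      pd k (pd i f) (z ∘ inl) * pd j f (z ∘ inl) + pd i f (z ∘ inl) * pd k (pd j f) (z ∘ inl) := by
  have hdi := (contDiff_pd hf i).differentiable (by simp) (z ∘ inl)
  have hdj := (contDiff_pd hf j).differentiable (by simp) (z ∘ inl)
  exact (pd_inl_comp_inl (h := fun x => pd i f x * pd j f x) (hdi.mul hdj) k).trans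
    (pd_mul k hdi hdj)

lemma pd_metric1_eq_zero (hf : ContDiff ℝ (⊤ : ℕ∞) f) {a b c : Fin p ⊕ Fin p}
    (h : a.isRight ∨ b.isRight ∨ c.isRight) (z : Fin p ⊕ Fin p → ℝ) :
    pd a (fun w => metric1 p f w b c) z = 0 := by
  rcases b with i | i <;> rcases c with j | j
  · obtain ⟨k, rfl⟩ : ∃ k, a = inr k := by
      rcases a with k | k <;> simp_all
    have hdi := (contDiff_pd hf i).differentiable (by simp) (z ∘ inl)
    have hdj := (contDiff_pd hf j).differentiable (by simp) (z ∘ inl)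
    exact pd_inr_comp_inl (h := fun x => pd i f x * pd j f x) (hdi.mul hdj) k
  all_goals exact pd_const a _ z

lemma christoffelFst_metric1_inl (hf : ContDiff ℝ (⊤ : ℕ∞) f) (i j k : Fin p)
    (z : Fin p ⊕ Fin p → ℝ) :
    christoffelFst (metric1 p f) (inl i) (inl j) (inl k) z =
      pd i (pd j f) (z ∘ inl) * pd k f (z ∘ inl) := by
  have hf₂ : ContDiff ℝ 2 f := hf.of_le (WithTop.coe_le_coe.mpr le_top)
  rw [christoffelFst, pd_metric1_inl_inl hf, pd_metric1_inl_inl hf, pd_metric1_inl_inl hf,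
    pd_comm hf₂ j i, pd_comm hf₂ k i, pd_comm hf₂ k j]
  ring

lemma christoffelFst_metric1_eq_zero (hf : ContDiff ℝ (⊤ : ℕ∞) f) {a b c : Fin p ⊕ Fin p}
    (h : a.isRight ∨ b.isRight ∨ c.isRight) (z : Fin p ⊕ Fin p → ℝ) :
    christoffelFst (metric1 p f) a b c z = 0 := by
  rw [christoffelFst, pd_metric1_eq_zero hf h, pd_metric1_eq_zero hf (by tauto),
    pd_metric1_eq_zero hf (by tauto)]
  ring

noncomputable def metric1Inv (p : ℕ) (f : (Fin p → ℝ) → ℝ) (z : Fin p ⊕ Fin p → ℝ) :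
    Matrix (Fin p ⊕ Fin p) (Fin p ⊕ Fin p) ℝ :=
  Matrix.of fun a b =>
    match a, b with
    | inl _, inl _ => 0
    | inl i, inr j => if i = j then 1 else 0
    | inr i, inl j => if i = j then 1 else 0
    | inr i, inr j => -(pd i f (z ∘ inl) * pd j f (z ∘ inl))

lemma metric1_inv (z : Fin p ⊕ Fin p → ℝ) : (metric1 p f z)⁻¹ = metric1Inv p f z := by
  apply Matrix.inv_eq_right_inv
  ext (i | i) (j | j) <;>
    simp [Matrix.mul_apply, Fintype.sum_sum_type, metric1, metric1Inv, Matrix.one_apply,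
      Function.comp_def, mul_comm, Finset.sum_ite_eq, Finset.sum_ite_eq']

lemma christoffelSnd_metric1_inl (hf : ContDiff ℝ (⊤ : ℕ∞) f) (a b : Fin p ⊕ Fin p) (m : Fin p)
    (z : Fin p ⊕ Fin p → ℝ) : christoffelSnd (metric1 p f) a b (inl m) z = 0 := by
  simp [christoffelSnd, metric1_inv, Fintype.sum_sum_type, metric1Inv,
    christoffelFst_metric1_eq_zero hf (c := inr _)]

lemma christoffelSnd_metric1_inr (hf : ContDiff ℝ (⊤ : ℕ∞) f) (a b : Fin p ⊕ Fin p) (m : Fin p)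
    (z : Fin p ⊕ Fin p → ℝ) :
    christoffelSnd (metric1 p f) a b (inr m) z = christoffelFst (metric1 p f) a b (inl m) z := by
  simp [christoffelSnd, metric1_inv, Fintype.sum_sum_type, metric1Inv,
    christoffelFst_metric1_eq_zero hf (c := inr _)]

lemma christoffelSnd_metric1_eq_zero (hf : ContDiff ℝ (⊤ : ℕ∞) f) {a b c : Fin p ⊕ Fin p}
    (h : a.isRight ∨ b.isRight ∨ c.isLeft) (z : Fin p ⊕ Fin p → ℝ) :
    christoffelSnd (metric1 p f) a b c z = 0 := by
  rcases c with m | m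
  · exact christoffelSnd_metric1_inl hf a b m z
  · rw [christoffelSnd_metric1_inr hf]
    exact christoffelFst_metric1_eq_zero hf (by simpa using h) z

lemma christoffelSnd_metric1_inl_inl_inr (hf : ContDiff ℝ (⊤ : ℕ∞) f) (i j m : Fin p) :
    christoffelSnd (metric1 p f) (inl i) (inl j) (inr m) =
      fun z => pd i (pd j f) (z ∘ inl) * pd m f (z ∘ inl) := by
  funext z
  rw [christoffelSnd_metric1_inr hf, christoffelFst_metric1_inl hf]

lemma pd_christoffelSnd_metric1_inl_inl_inr (hf : ContDiff ℝ (⊤ : ℕ∞) f) (i j k m : Fin p)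
    (z : Fin p ⊕ Fin p → ℝ) :
    pd (inl k) (christoffelSnd (metric1 p f) (inl i) (inl j) (inr m)) z =
      pd k (pd i (pd j f)) (z ∘ inl) * pd m f (z ∘ inl)
        + pd i (pd j f) (z ∘ inl) * pd k (pd m f) (z ∘ inl) := by
  have hdij := (contDiff_pd (contDiff_pd hf j) i).differentiable (by simp) (z ∘ inl)
  have hdm := (contDiff_pd hf m).differentiable (by simp) (z ∘ inl)
  rw [christoffelSnd_metric1_inl_inl_inr hf]
  exact (pd_inl_comp_inl (h := fun x => pd i (pd j f) x * pd m f x) (hdij.mul hdm) k).trans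
    (pd_mul k hdij hdm)

lemma pd_christoffelSnd_metric1_eq_zero (hf : ContDiff ℝ (⊤ : ℕ∞) f) {a b c e : Fin p ⊕ Fin p}
    (h : a.isRight ∨ b.isRight ∨ c.isRight ∨ e.isLeft) (z : Fin p ⊕ Fin p → ℝ) :
    pd a (christoffelSnd (metric1 p f) b c e) z = 0 := by
  rcases b with i | i <;> rcases c with j | j <;> rcases e with m | m
  case inl.inl.inr =>
    obtain ⟨k, rfl⟩ : ∃ k, a = inr k := by rcases a with k | k <;> simp_all
    have hdij := (contDiff_pd (contDiff_pd hf j) i).differentiable (by simp) (z ∘ inl)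
    have hdm := (contDiff_pd hf m).differentiable (by simp) (z ∘ inl)
    rw [christoffelSnd_metric1_inl_inl_inr hf]
    exact pd_inr_comp_inl (h := fun x => pd i (pd j f) x * pd m f x) (hdij.mul hdm) k
  all_goals
    rw [funext (christoffelSnd_metric1_eq_zero hf (by simp))]
    exact pd_const a 0 z

lemma christoffelSnd_mul_christoffelSnd_metric1 (hf : ContDiff ℝ (⊤ : ℕ∞) f)
    (a b c d e : Fin p ⊕ Fin p) (z : Fin p ⊕ Fin p → ℝ) :
    christoffelSnd (metric1 p f) b c d z * christoffelSnd (metric1 p f) a d e z = 0 := by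
  rcases d with l | l
  · rw [christoffelSnd_metric1_inl hf, zero_mul]
  · rw [christoffelSnd_metric1_eq_zero hf (b := inr l) (by simp), mul_zero]

lemma curvU_metric1 (hf : ContDiff ℝ (⊤ : ℕ∞) f) (a b c e : Fin p ⊕ Fin p)
    (z : Fin p ⊕ Fin p → ℝ) :
    curvU (metric1 p f) a b c e z =
      pd a (christoffelSnd (metric1 p f) b c e) z
        - pd b (christoffelSnd (metric1 p f) a c e) z := by
  simp [curvU, christoffelSnd_mul_christoffelSnd_metric1 hf]

lemma curvU_metric1_inl_inl_inl_inr (hf : ContDiff ℝ (⊤ : ℕ∞) f) (i j k m : Fin p)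
    (z : Fin p ⊕ Fin p → ℝ) :
    curvU (metric1 p f) (inl i) (inl j) (inl k) (inr m) z =
      pd i (pd m f) (z ∘ inl) * pd j (pd k f) (z ∘ inl)
        - pd i (pd k f) (z ∘ inl) * pd j (pd m f) (z ∘ inl) := by
  have hfk₂ : ContDiff ℝ 2 (pd k f) := (contDiff_pd hf k).of_le (WithTop.coe_le_coe.mpr le_top)
  rw [curvU_metric1 hf, pd_christoffelSnd_metric1_inl_inl_inr hf,
    pd_christoffelSnd_metric1_inl_inl_inr hf, pd_comm hfk₂ i j]
  ring

lemma curvU_metric1_eq_zero (hf : ContDiff ℝ (⊤ : ℕ∞) f) {a b c e : Fin p ⊕ Fin p}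
    (h : a.isRight ∨ b.isRight ∨ c.isRight ∨ e.isLeft) (z : Fin p ⊕ Fin p → ℝ) :
    curvU (metric1 p f) a b c e z = 0 := by
  rw [curvU_metric1 hf, pd_christoffelSnd_metric1_eq_zero hf h,
    pd_christoffelSnd_metric1_eq_zero hf (by tauto), sub_zero]

lemma curv_metric1_inl (hf : ContDiff ℝ (⊤ : ℕ∞) f) (a b c : Fin p ⊕ Fin p) (l : Fin p)
    (z : Fin p ⊕ Fin p → ℝ) :
    curv (metric1 p f) a b c (inl l) z = curvU (metric1 p f) a b c (inr l) z := by
  simp [curv, Fintype.sum_sum_type, curvU_metric1_eq_zero hf (e := inl _), metric1]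

lemma curv_metric1_inr (hf : ContDiff ℝ (⊤ : ℕ∞) f) (a b c : Fin p ⊕ Fin p) (r : Fin p)
    (z : Fin p ⊕ Fin p → ℝ) : curv (metric1 p f) a b c (inr r) z = 0 := by
  simp [curv, Fintype.sum_sum_type, curvU_metric1_eq_zero hf (e := inl _), metric1]

end Metric1

/-- Theorem 1.3 (3): the only nonzero components of the curvature tensor of `g_{1,p,f}` are
`R(∂_i^x,∂_j^x,∂_k^x,∂_l^x) = H_{il}H_{jk} - H_{ik}H_{jl}`, with `H` the Hessian of `f`;
every component involving a `∂^y` direction vanishes. -/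
theorem stmt6 (p : ℕ) (f : (Fin p → ℝ) → ℝ) (hf : ContDiff ℝ (⊤ : ℕ∞) f) :
    ∀ z : (Fin p ⊕ Fin p) → ℝ,
      (∀ i j k l : Fin p,
        curv (metric1 p f) (Sum.inl i) (Sum.inl j) (Sum.inl k) (Sum.inl l) z =
          pd i (pd l f) (fun m => z (Sum.inl m)) * pd j (pd k f) (fun m => z (Sum.inl m))
          - pd i (pd k f) (fun m => z (Sum.inl m)) * pd j (pd l f) (fun m => z (Sum.inl m))) ∧
      (∀ a b c d : Fin p ⊕ Fin p, (a.isRight ∨ b.isRight ∨ c.isRight ∨ d.isRight) →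
        curv (metric1 p f) a b c d z = 0) := by
  intro z
  refine ⟨fun i j k l => ?_, fun a b c d h => ?_⟩
  · rw [curv_metric1_inl hf, curvU_metric1_inl_inl_inl_inr hf]
    rfl
  · rcases d with l | r
    · rw [curv_metric1_inl hf]
      exact curvU_metric1_eq_zero hf (by simpa using h) z
    · exact curv_metric1_inr hf a b c r z
end

section
/- Let (z_1,...,z_n) be global coordinates on ℝ^n and g a pseudo-Riemannian metric whose Levi-Civita connection satisfies ∇_{∂_a}∂_b = Σ_{c > max(a,b)} Γ_{ab}^c(z_1,...,z_{c-1}) ∂_c, i.e. the Christoffel symbol Γ_{ab}^c vanishes unless c > a and c > b, and depends only on z_1,...,z_{c-1}. Then every geodesic of (ℝ^n,g) extends for all time: the manifold is geodesically complete. -/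
/-!
The geodesic equations are triangular: `z̈_c` is a continuous function of the `z_d, ż_d` with
`d < c` only. The coordinates can therefore be built one at a time, `z_c` being
`p + v t + ∫₀ᵗ ∫₀ˢ (…)` of an already constructed continuous function, which is defined for all
`t`; no local existence theory of ODEs is needed.
-/

/-- `γ : ℝ → ℝ^n` is a geodesic for the Christoffel symbols `Γ_{ab}^c` if each coordinate is
differentiable and `z̈_c + Σ_{a,b} ż_a ż_b Γ_{ab}^c(γ) = 0`. -/
def IsGeodesic {n : ℕ} (Γ : Fin n → Fin n → Fin n → (Fin n → ℝ) → ℝ)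
    (γ : ℝ → Fin n → ℝ) : Prop :=
  (∀ c t, DifferentiableAt ℝ (fun s => γ s c) t) ∧
  (∀ c t, HasDerivAt (deriv fun s => γ s c)
      (-(∑ a, ∑ b, deriv (fun s => γ s a) t * deriv (fun s => γ s b) t * Γ a b c (γ t))) t)

noncomputable section

def secondPrimitive (p v : ℝ) (f : ℝ → ℝ) (t : ℝ) : ℝ :=
  p + v * t + ∫ s in (0 : ℝ)..t, ∫ u in (0 : ℝ)..s, f u

section secondPrimitive

variable {f : ℝ → ℝ} (p v : ℝ)

theorem secondPrimitive_zero : secondPrimitive p v f 0 = p := by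
  simp [secondPrimitive]

theorem hasDerivAt_secondPrimitive (hf : Continuous f) (t : ℝ) :
    HasDerivAt (secondPrimitive p v f) (v + ∫ u in (0 : ℝ)..t, f u) t := by
  have hF : Continuous fun s => ∫ u in (0 : ℝ)..s, f u :=
    intervalIntegral.continuous_primitive (fun _ _ => hf.intervalIntegrable _ _) 0
  exact (((hasDerivAt_id t).const_mul v).const_add p).add
    (hF.integral_hasStrictDerivAt 0 t).hasDerivAt |>.congr_deriv (by rw [mul_one])

theorem deriv_secondPrimitive (hf : Continuous f) :
    deriv (secondPrimitive p v f) = fun t => v + ∫ u in (0 : ℝ)..t, f u :=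
  funext fun t => (hasDerivAt_secondPrimitive p v hf t).deriv

theorem deriv_secondPrimitive_zero (hf : Continuous f) :
    deriv (secondPrimitive p v f) 0 = v := by
  simp [deriv_secondPrimitive p v hf]

theorem hasDerivAt_deriv_secondPrimitive (hf : Continuous f) (t : ℝ) :
    HasDerivAt (deriv (secondPrimitive p v f)) (f t) t := by
  rw [deriv_secondPrimitive p v hf]
  exact (hf.integral_hasStrictDerivAt 0 t).hasDerivAt.const_add v

theorem contDiff_one_secondPrimitive (hf : Continuous f) :
    ContDiff ℝ 1 (secondPrimitive p v f) :=
  contDiff_one_iff_deriv.2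
    ⟨fun t => (hasDerivAt_secondPrimitive p v hf t).differentiableAt,
      continuous_iff_continuousAt.2 fun t =>
        (hasDerivAt_deriv_secondPrimitive p v hf t).continuousAt⟩

end secondPrimitive

variable {n : ℕ} (Γ : Fin n → Fin n → Fin n → (Fin n → ℝ) → ℝ)

def geodesicAcceleration (c : Fin n) (z : Fin n → ℝ → ℝ) (t : ℝ) : ℝ :=
  -∑ a, ∑ b, deriv (z a) t * deriv (z b) t * Γ a b c fun d => z d t

theorem continuous_geodesicAcceleration (hcont : ∀ a b c, Continuous (Γ a b c))
    {z : Fin n → ℝ → ℝ} (hz : ∀ d, ContDiff ℝ 1 (z d)) (c : Fin n) :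
    Continuous (geodesicAcceleration Γ c z) := by
  have hdz : ∀ d, Continuous (deriv (z d)) := fun d => (hz d).continuous_deriv le_rfl
  unfold geodesicAcceleration
  fun_prop

theorem geodesicAcceleration_congr
    (htri : ∀ a b c : Fin n, ¬(a < c ∧ b < c) → ∀ z, Γ a b c z = 0)
    (hdep : ∀ (a b c : Fin n) (z w : Fin n → ℝ), (∀ d, d < c → z d = w d) →
      Γ a b c z = Γ a b c w)
    {c : Fin n} {z w : Fin n → ℝ → ℝ} (hzw : ∀ d < c, z d = w d) :
    geodesicAcceleration Γ c z = geodesicAcceleration Γ c w := by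
  funext t
  unfold geodesicAcceleration
  congr 1
  refine Finset.sum_congr rfl fun a _ => Finset.sum_congr rfl fun b _ => ?_
  by_cases hab : a < c ∧ b < c
  · rw [hzw a hab.1, hzw b hab.2, hdep a b c _ _ fun d hd => by rw [hzw d hd]]
  · simp [htri a b c hab]

/-- Coordinates `d ≥ c` are replaced by `0` so that the recursion only calls smaller indices;
by `triangularGeodesic_eq_secondPrimitive` the truncation does not change the acceleration. -/
def triangularGeodesic (P V : Fin n → ℝ) (c : Fin n) : ℝ → ℝ :=
  secondPrimitive (P c) (V c) <| geodesicAcceleration Γ c fun d =>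
    if d < c then triangularGeodesic P V d else 0
termination_by c

theorem triangularGeodesic_eq (P V : Fin n → ℝ) (c : Fin n) :
    triangularGeodesic Γ P V c = secondPrimitive (P c) (V c)
      (geodesicAcceleration Γ c fun d => if d < c then triangularGeodesic Γ P V d else 0) := by
  rw [triangularGeodesic]

theorem contDiff_one_triangularGeodesic (hcont : ∀ a b c, Continuous (Γ a b c))
    (P V : Fin n → ℝ) (c : Fin n) : ContDiff ℝ 1 (triangularGeodesic Γ P V c) := by
  induction c using WellFoundedLT.induction with
  | _ c ih =>
    rw [triangularGeodesic_eq]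
    refine contDiff_one_secondPrimitive _ _
      (continuous_geodesicAcceleration Γ hcont (fun d => ?_) c)
    split_ifs with hd
    exacts [ih d hd, contDiff_const]

theorem triangularGeodesic_eq_secondPrimitive
    (htri : ∀ a b c : Fin n, ¬(a < c ∧ b < c) → ∀ z, Γ a b c z = 0)
    (hdep : ∀ (a b c : Fin n) (z w : Fin n → ℝ), (∀ d, d < c → z d = w d) →
      Γ a b c z = Γ a b c w)
    (P V : Fin n → ℝ) (c : Fin n) :
    triangularGeodesic Γ P V c =
      secondPrimitive (P c) (V c) (geodesicAcceleration Γ c (triangularGeodesic Γ P V)) := by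
  rw [triangularGeodesic_eq, geodesicAcceleration_congr Γ htri hdep fun d hd => if_pos hd]

end

/-- Lemma 2.1 (1): if the Christoffel symbols satisfy the triangular condition
(`Γ_{ab}^c = 0` unless `c > a` and `c > b`, with `Γ_{ab}^c` depending only on `z_1,...,z_{c-1}`),
then the manifold is geodesically complete: for every initial condition there is a geodesic
defined for all time. -/
theorem stmt8 (n : ℕ) (Γ : Fin n → Fin n → Fin n → (Fin n → ℝ) → ℝ)
    (hcont : ∀ a b c, Continuous (Γ a b c))
    (htri : ∀ a b c : Fin n, ¬(a < c ∧ b < c) → ∀ z, Γ a b c z = 0)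
    (hdep : ∀ (a b c : Fin n) (z w : Fin n → ℝ), (∀ d, d < c → z d = w d) → Γ a b c z = Γ a b c w) :
    ∀ P V₀ : Fin n → ℝ, ∃ γ : ℝ → Fin n → ℝ, IsGeodesic Γ γ ∧ γ 0 = P ∧
      (∀ c, deriv (fun s => γ s c) 0 = V₀ c) := by
  intro P V₀
  have hsmooth := contDiff_one_triangularGeodesic Γ hcont P V₀
  have hfix := triangularGeodesic_eq_secondPrimitive Γ htri hdep P V₀
  have hacc := continuous_geodesicAcceleration Γ hcont hsmooth
  refine ⟨fun t c => triangularGeodesic Γ P V₀ c t,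
    ⟨fun c t => (hsmooth c).differentiable one_ne_zero t, fun c t => ?_⟩,
    funext fun c => ?_, fun c => ?_⟩
  · show HasDerivAt (deriv (triangularGeodesic Γ P V₀ c))
      (geodesicAcceleration Γ c (triangularGeodesic Γ P V₀) t) t
    rw [hfix c]
    exact hasDerivAt_deriv_secondPrimitive _ _ (hacc c) t
  · show triangularGeodesic Γ P V₀ c 0 = P c
    rw [hfix c, secondPrimitive_zero]
  · show deriv (triangularGeodesic Γ P V₀ c) 0 = V₀ c
    rw [hfix c, deriv_secondPrimitive_zero _ _ (hacc c)]
end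

section
/- Under the hypotheses of the triangular Christoffel symbol condition (Γ_{ab}^c = 0 unless c > max(a,b), and Γ_{ab}^c depends only on z_1,...,z_{c-1}), for any two points P, Q ∈ ℝ^n there exists a unique geodesic γ with γ(0) = P and γ(1) = Q; consequently exp_P : T_Pℝ^n → ℝ^n is a bijection for every P. -/
section SecondOrder

theorem exists_contDiff_hasDerivAt_deriv_eq {f : ℝ → ℝ} (hf : Continuous f) (A B : ℝ) :
    ∃ h : ℝ → ℝ, ContDiff ℝ 1 h ∧ h 0 = A ∧ h 1 = B ∧ ∀ t, HasDerivAt (deriv h) (f t) t := by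
  set I : ℝ → ℝ := fun t => ∫ u in (0 : ℝ)..t, f u
  have hI : ∀ t, HasDerivAt I (f t) t := fun t => (hf.integral_hasStrictDerivAt 0 t).hasDerivAt
  have hIcont : Continuous I := continuous_iff_continuousAt.mpr fun t => (hI t).continuousAt
  set J : ℝ → ℝ := fun t => ∫ u in (0 : ℝ)..t, I u
  have hJ : ∀ t, HasDerivAt J (I t) t := fun t =>
    (hIcont.integral_hasStrictDerivAt 0 t).hasDerivAt
  have hJ0 : J 0 = 0 := intervalIntegral.integral_same
  set C := B - A - J 1
  have hh : ∀ t, HasDerivAt (fun t => A + C * t + J t) (C + I t) t := fun t =>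
    (((hasDerivAt_id t).const_mul C).const_add A).add (hJ t) |>.congr_deriv (by simp)
  have hderiv : deriv (fun t => A + C * t + J t) = fun t => C + I t := funext fun t => (hh t).deriv
  refine ⟨fun t => A + C * t + J t, ?_, by simp [hJ0], by simp only [C]; ring, ?_⟩
  · rw [contDiff_one_iff_deriv, hderiv]
    exact ⟨fun t => (hh t).differentiableAt, continuous_const.add hIcont⟩
  · intro t
    rw [hderiv]
    exact (hI t).const_add C

theorem eq_add_mul_of_hasDerivAt_deriv_zero {g : ℝ → ℝ} (hg : Differentiable ℝ g)
    (hg' : ∀ t, HasDerivAt (deriv g) 0 t) (t : ℝ) : g t = g 0 + deriv g 0 * t := by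
  have hconst : ∀ s, deriv g s = deriv g 0 := fun s =>
    is_const_of_deriv_eq_zero (fun x => (hg' x).differentiableAt) (fun x => (hg' x).deriv) s 0
  have hu : ∀ s, HasDerivAt (fun s => g s - deriv g 0 * s) 0 s := fun s =>
    ((hg s).hasDerivAt.sub ((hasDerivAt_id s).const_mul (deriv g 0))).congr_deriv
      (by simp [hconst s])
  have := is_const_of_deriv_eq_zero (fun x => (hu x).differentiableAt) (fun x => (hu x).deriv) t 0
  simp only [mul_zero, sub_zero] at this
  linarith

theorem eq_of_hasDerivAt_deriv_eq {g₁ g₂ k : ℝ → ℝ} (hg₁ : Differentiable ℝ g₁)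
    (hg₂ : Differentiable ℝ g₂) (hk₁ : ∀ t, HasDerivAt (deriv g₁) (k t) t)
    (hk₂ : ∀ t, HasDerivAt (deriv g₂) (k t) t) (h0 : g₁ 0 = g₂ 0) (h1 : g₁ 1 = g₂ 1) :
    g₁ = g₂ := by
  have hderiv : deriv (g₁ - g₂) = deriv g₁ - deriv g₂ :=
    funext fun t => deriv_sub (hg₁ t) (hg₂ t)
  have hzero : ∀ t, HasDerivAt (deriv (g₁ - g₂)) 0 t := fun t => by
    rw [hderiv]
    simpa using (hk₁ t).sub (hk₂ t)
  have affine := eq_add_mul_of_hasDerivAt_deriv_zero (hg₁.sub hg₂) hzero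
  have hslope : deriv (g₁ - g₂) 0 = 0 := by
    simpa [h0, h1] using (affine 1).symm
  funext t
  have := affine t
  simp only [Pi.sub_apply, h0, sub_self, hslope, zero_mul, add_zero] at this
  linarith

end SecondOrder

section Geodesic

variable {n : ℕ} {Γ : Fin n → Fin n → Fin n → (Fin n → ℝ) → ℝ}

noncomputable def geodesicAccel (Γ : Fin n → Fin n → Fin n → (Fin n → ℝ) → ℝ)
    (γ : ℝ → Fin n → ℝ) (c : Fin n) (t : ℝ) : ℝ :=
  -(∑ a, ∑ b, deriv (fun s => γ s a) t * deriv (fun s => γ s b) t * Γ a b c (γ t))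

theorem geodesicAccel_congr
    (htri : ∀ a b c : Fin n, ¬(a < c ∧ b < c) → ∀ z, Γ a b c z = 0)
    (hdep : ∀ (a b c : Fin n) (z w : Fin n → ℝ), (∀ d, d < c → z d = w d) →
      Γ a b c z = Γ a b c w)
    {γ₁ γ₂ : ℝ → Fin n → ℝ} {c : Fin n}
    (h : ∀ d, d < c → (fun s => γ₁ s d) = fun s => γ₂ s d) :
    geodesicAccel Γ γ₁ c = geodesicAccel Γ γ₂ c := by
  funext t
  unfold geodesicAccel
  congr 1
  refine Finset.sum_congr rfl fun a _ => Finset.sum_congr rfl fun b _ => ?_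
  by_cases hab : a < c ∧ b < c
  · rw [h a hab.1, h b hab.2, hdep a b c _ _ fun d hd => congrFun (h d hd) t]
  · simp [htri a b c hab]

theorem continuous_geodesicAccel (hcont : ∀ a b c, Continuous (Γ a b c))
    {γ : ℝ → Fin n → ℝ} (hγ : ∀ c, ContDiff ℝ 1 fun s => γ s c) (c : Fin n) :
    Continuous (geodesicAccel Γ γ c) := by
  have hderiv : ∀ a, Continuous (deriv fun s => γ s a) := fun a =>
    (contDiff_one_iff_deriv.mp (hγ a)).2
  have hγcont : Continuous γ := continuous_pi fun d => (hγ d).continuous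
  unfold geodesicAccel
  refine (continuous_finsetSum _ fun a _ => continuous_finsetSum _ fun b _ => ?_).neg
  exact ((hderiv a).mul (hderiv b)).mul ((hcont a b c).comp hγcont)

theorem geodesicAccel_update_of_le
    (htri : ∀ a b c : Fin n, ¬(a < c ∧ b < c) → ∀ z, Γ a b c z = 0)
    (hdep : ∀ (a b c : Fin n) (z w : Fin n → ℝ), (∀ d, d < c → z d = w d) →
      Γ a b c z = Γ a b c w)
    (γ : ℝ → Fin n → ℝ) {c₀ c : Fin n} (h : ℝ → ℝ) (hc : c ≤ c₀) :
    geodesicAccel Γ (fun t => Function.update (γ t) c₀ (h t)) c = geodesicAccel Γ γ c :=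
  geodesicAccel_congr htri hdep fun _ hd => funext fun _ =>
    Function.update_of_ne (hd.trans_le hc).ne _ _

theorem exists_partial_geodesic (hcont : ∀ a b c, Continuous (Γ a b c))
    (htri : ∀ a b c : Fin n, ¬(a < c ∧ b < c) → ∀ z, Γ a b c z = 0)
    (hdep : ∀ (a b c : Fin n) (z w : Fin n → ℝ), (∀ d, d < c → z d = w d) →
      Γ a b c z = Γ a b c w)
    (P Q : Fin n → ℝ) (m : ℕ) :
    ∃ γ : ℝ → Fin n → ℝ, γ 0 = P ∧ γ 1 = Q ∧ (∀ c, ContDiff ℝ 1 fun s => γ s c) ∧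
      ∀ c : Fin n, (c : ℕ) < m → ∀ t,
        HasDerivAt (deriv fun s => γ s c) (geodesicAccel Γ γ c t) t := by
  induction m with
  | zero =>
    refine ⟨fun t c => P c + t * (Q c - P c), by simp, by simp, fun c => by fun_prop,
      fun c hc => absurd hc (Nat.not_lt_zero _)⟩
  | succ m ih =>
    obtain ⟨γ, hγ0, hγ1, hγ, hsolves⟩ := ih
    by_cases hm : m < n
    swap
    · exact ⟨γ, hγ0, hγ1, hγ, fun c hc => hsolves c (by omega)⟩
    set c₀ : Fin n := ⟨m, hm⟩
    obtain ⟨h, hh, hh0, hh1, hh''⟩ := exists_contDiff_hasDerivAt_deriv_eq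
      (continuous_geodesicAccel hcont hγ c₀) (P c₀) (Q c₀)
    have hcoord : ∀ c, (fun s => Function.update (γ s) c₀ (h s) c) =
        if c = c₀ then h else fun s => γ s c := fun c => by
      split_ifs with hc
      · subst hc; simp
      · simp [Function.update_of_ne hc]
    refine ⟨fun t => Function.update (γ t) c₀ (h t), ?_, ?_, fun c => ?_, fun c hc t => ?_⟩
    · show Function.update (γ 0) c₀ (h 0) = P
      rw [hh0, ← hγ0, Function.update_eq_self]
    · show Function.update (γ 1) c₀ (h 1) = Q
      rw [hh1, ← hγ1, Function.update_eq_self]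
    · rw [hcoord]; split_ifs
      exacts [hh, hγ c]
    · rw [hcoord, geodesicAccel_update_of_le htri hdep γ h]
      · split_ifs with hcc
        · subst hcc; exact hh'' t
        · exact hsolves c (by have : (c : ℕ) ≠ m := fun h => hcc (Fin.ext h); omega) t
      · show (c : ℕ) ≤ m; omega

theorem exists_isGeodesic (hcont : ∀ a b c, Continuous (Γ a b c))
    (htri : ∀ a b c : Fin n, ¬(a < c ∧ b < c) → ∀ z, Γ a b c z = 0)
    (hdep : ∀ (a b c : Fin n) (z w : Fin n → ℝ), (∀ d, d < c → z d = w d) →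
      Γ a b c z = Γ a b c w)
    (P Q : Fin n → ℝ) : ∃ γ, IsGeodesic Γ γ ∧ γ 0 = P ∧ γ 1 = Q := by
  obtain ⟨γ, hγ0, hγ1, hγ, hsolves⟩ := exists_partial_geodesic hcont htri hdep P Q n
  exact ⟨γ, ⟨fun c t => (hγ c).differentiable one_ne_zero t, fun c => hsolves c c.isLt⟩, hγ0, hγ1⟩

theorem IsGeodesic.eq_of_apply_zero_of_apply_one
    (htri : ∀ a b c : Fin n, ¬(a < c ∧ b < c) → ∀ z, Γ a b c z = 0)
    (hdep : ∀ (a b c : Fin n) (z w : Fin n → ℝ), (∀ d, d < c → z d = w d) →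
      Γ a b c z = Γ a b c w)
    {γ₁ γ₂ : ℝ → Fin n → ℝ} (hγ₁ : IsGeodesic Γ γ₁) (hγ₂ : IsGeodesic Γ γ₂)
    (h0 : γ₁ 0 = γ₂ 0) (h1 : γ₁ 1 = γ₂ 1) : γ₁ = γ₂ := by
  suffices hcoord : ∀ c, (fun s => γ₁ s c) = fun s => γ₂ s c from
    funext fun t => funext fun c => congrFun (hcoord c) t
  intro c
  induction c using WellFoundedLT.induction with
  | _ c ih =>
    have haccel : geodesicAccel Γ γ₁ c = geodesicAccel Γ γ₂ c := geodesicAccel_congr htri hdep ih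
    refine eq_of_hasDerivAt_deriv_eq (k := geodesicAccel Γ γ₁ c) (hγ₁.1 c) (hγ₂.1 c) (hγ₁.2 c)
      (fun t => ?_) (congrFun h0 c) (congrFun h1 c)
    rw [haccel]
    exact hγ₂.2 c t

end Geodesic

/-- Lemma 2.1 (2): under the triangular Christoffel condition, any two points `P, Q` are joined
by a unique geodesic `γ` with `γ(0) = P`, `γ(1) = Q`; consequently, for each `P` and each `Q`
there is a unique initial velocity whose geodesic reaches `Q` at time `1`, i.e. `exp_P` is a
bijection. -/
theorem stmt9 (n : ℕ) (Γ : Fin n → Fin n → Fin n → (Fin n → ℝ) → ℝ)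
    (hcont : ∀ a b c, Continuous (Γ a b c))
    (htri : ∀ a b c : Fin n, ¬(a < c ∧ b < c) → ∀ z, Γ a b c z = 0)
    (hdep : ∀ (a b c : Fin n) (z w : Fin n → ℝ), (∀ d, d < c → z d = w d) → Γ a b c z = Γ a b c w) :
    (∀ P Q : Fin n → ℝ, ∃! γ : ℝ → Fin n → ℝ, IsGeodesic Γ γ ∧ γ 0 = P ∧ γ 1 = Q) ∧
    (∀ P Q : Fin n → ℝ, ∃! v : Fin n → ℝ, ∃ γ : ℝ → Fin n → ℝ,
      IsGeodesic Γ γ ∧ γ 0 = P ∧ (∀ c, deriv (fun s => γ s c) 0 = v c) ∧ γ 1 = Q) := by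
  have unique_geodesic : ∀ P Q : Fin n → ℝ, ∃! γ : ℝ → Fin n → ℝ,
      IsGeodesic Γ γ ∧ γ 0 = P ∧ γ 1 = Q := fun P Q => by
    obtain ⟨γ, hγ, hγ0, hγ1⟩ := exists_isGeodesic hcont htri hdep P Q
    refine ⟨γ, ⟨hγ, hγ0, hγ1⟩, fun γ' ⟨hγ', hγ'0, hγ'1⟩ => ?_⟩
    exact hγ'.eq_of_apply_zero_of_apply_one htri hdep hγ (hγ'0.trans hγ0.symm)
      (hγ'1.trans hγ1.symm)
  refine ⟨unique_geodesic, fun P Q => ?_⟩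
  obtain ⟨γ, ⟨hγ, hγ0, hγ1⟩, huniq⟩ := unique_geodesic P Q
  refine ⟨fun c => deriv (fun s => γ s c) 0, ⟨γ, hγ, hγ0, fun c => rfl, hγ1⟩, ?_⟩
  rintro v ⟨γ', hγ', hγ'0, hv, hγ'1⟩
  obtain rfl := huniq γ' ⟨hγ', hγ'0, hγ'1⟩
  exact funext fun c => (hv c).symm
end

section
/- Let V = ℝ^{2r+2} with basis {X, Y, U_1,...,U_r, V_1,...,V_r}, inner product g(X,Y) = 1, g(U_i,V_i) = 1 (others zero), and algebraic curvature tensor A with nonzero components A(X,U_r,U_r,X) = 1 and A(X,U_i,V_{i+1},X) = 1 for 1 ≤ i ≤ r-1. Then for every ξ ∈ V the Jacobi operator J(ξ), defined by g(J(ξ)y,z) = A(y,ξ,ξ,z), satisfies J(ξ)^{2r} = 0. -/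
/-- `ℝ^{2r+2}` with coordinates `(u, v, x, y)`: for `a : V3 r`, `a.1` are the `U`-coordinates,
`a.2.1` the `V`-coordinates, `a.2.2.1` the `X`-coordinate and `a.2.2.2` the `Y`-coordinate. -/
abbrev V3 (r : ℕ) := (Fin r → ℝ) × (Fin r → ℝ) × ℝ × ℝ

/-- The symmetric bilinear form with `S(U_r,U_r) = 1` and `S(U_i,V_{i+1}) = S(V_{i+1},U_i) = 1`
for `1 ≤ i ≤ r-1` (all other components zero). -/
def S3 (r : ℕ) (b c : V3 r) : ℝ :=
  (if h : 0 < r then b.1 ⟨r - 1, Nat.sub_lt h Nat.one_pos⟩ * c.1 ⟨r - 1, Nat.sub_lt h Nat.one_pos⟩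
   else 0)
  + ∑ i : Fin r, (if h : i.1 + 1 < r
      then b.1 i * c.2.1 ⟨i.1 + 1, h⟩ + b.2.1 ⟨i.1 + 1, h⟩ * c.1 i else 0)

/-- The neutral signature inner product: `g(X,Y) = 1`, `g(U_i,V_i) = 1`. -/
def g3v (r : ℕ) (a b : V3 r) : ℝ :=
  a.2.2.1 * b.2.2.2 + a.2.2.2 * b.2.2.1 + ∑ i, (a.1 i * b.2.1 i + a.2.1 i * b.1 i)

/-- The algebraic curvature tensor `A_{3,r}`, whose only nonzero components up to the
curvature symmetries are `A(X,U_r,U_r,X) = 1` and `A(X,U_i,V_{i+1},X) = 1` for `1 ≤ i ≤ r-1`. -/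
def A3 (r : ℕ) (a b c d : V3 r) : ℝ :=
  S3 r b c * a.2.2.1 * d.2.2.1 - S3 r b d * a.2.2.1 * c.2.2.1
  - S3 r a c * b.2.2.1 * d.2.2.1 + S3 r a d * b.2.2.1 * c.2.2.1


/-! Let `N` be the endomorphism with `g(N w, z) = S(w, z)`: it moves along the chain
`U_1 → ⋯ → U_r → V_r → ⋯ → V_1 → 0` and kills `X` and `Y`, so `N ^ (2r) = 0`. Writing `a = ξ_X`,
`φ` for the `X`-coordinate and `β = -a g(·, ξ)`, the defining identity gives
`J = a² N + Y ⊗ (β ∘ N) + φ ⊗ (S(ξ,ξ) Y - a N ξ)`. The image of `J` lies in `ker φ`, on which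
`J` agrees with `T = a² N + Y ⊗ (β ∘ N)`, so `J ^ (2r) = T ^ (2r-1) J`. Since `N Y = 0`, every power
`T ^ (k+1)` factors through `N ^ (k+1)`, and `N ^ (2r-1) J = 0`. -/

section RankOnePerturbation

variable {R M : Type*} [CommRing R] [AddCommGroup M] [Module R M]

theorem pow_succ_smul_add_smulRight_comp {N : Module.End R M} {y₀ : M} (hNy₀ : N y₀ = 0)
    (a : R) (β : M →ₗ[R] R) (k : ℕ) :
    (a • N + (β ∘ₗ N).smulRight y₀) ^ (k + 1)
      = a ^ (k + 1) • N ^ (k + 1) + a ^ k • (β ∘ₗ N ^ (k + 1)).smulRight y₀ := by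
  induction k with
  | zero => simp
  | succ k ih =>
    rw [pow_succ, ih]
    ext z
    simp [pow_succ, Module.End.mul_apply, hNy₀, smul_smul, mul_assoc]

theorem pow_succ_eq_mul_of_comp_eq_zero {J T : Module.End R M} {φ : M →ₗ[R] R} {w : M}
    (hJ : J = T + φ.smulRight w) (hφJ : φ ∘ₗ J = 0) (k : ℕ) : J ^ (k + 1) = T ^ k * J := by
  induction k with
  | zero => simp
  | succ k ih =>
    have hJJ : J * J = T * J := by
      ext y
      have : φ (J y) = 0 := LinearMap.congr_fun hφJ y
      simp [LinearMap.congr_fun hJ (J y), this]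
    rw [pow_succ, ih, mul_assoc, hJJ, pow_succ, mul_assoc]

theorem pow_eq_zero_of_eq_smul_add_smulRight {J N : Module.End R M} {a : R} {β φ : M →ₗ[R] R}
    {y₀ w : M} {n : ℕ} (hJ : J = a • N + (β ∘ₗ N).smulRight y₀ + φ.smulRight w)
    (hφJ : φ ∘ₗ J = 0) (hNy₀ : N y₀ = 0) (hN : N ^ (n + 2) = 0) (hw : (N ^ (n + 1)) w = 0) :
    J ^ (n + 2) = 0 := by
  have hNJ : N ^ (n + 1) * J = 0 := by
    have hNN : ∀ y, (N ^ (n + 1)) (N y) = 0 := fun y => by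
      rw [← Module.End.mul_apply, ← pow_succ, hN, LinearMap.zero_apply]
    have hNy₀' : (N ^ (n + 1)) y₀ = 0 := by rw [pow_succ, Module.End.mul_apply, hNy₀, map_zero]
    ext y
    simp [hJ, hNN, hNy₀', hw]
  rw [pow_succ_eq_mul_of_comp_eq_zero hJ hφJ, pow_succ_smul_add_smulRight_comp hNy₀]
  ext y
  have hy : (N ^ (n + 1)) (J y) = 0 := LinearMap.congr_fun hNJ y
  simp [Module.End.mul_apply, hy]

end RankOnePerturbation

def g3vForm (r : ℕ) : LinearMap.BilinForm ℝ (V3 r) :=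
  LinearMap.mk₂ ℝ (g3v r)
    (fun a b c => by
      simp only [g3v, Prod.fst_add, Prod.snd_add, Pi.add_apply, add_mul, Finset.sum_add_distrib]
      ring)
    (fun t a b => by
      simp only [g3v, Prod.smul_fst, Prod.smul_snd, Pi.smul_apply, smul_eq_mul, mul_add,
        Finset.mul_sum]
      ring_nf)
    (fun a b c => by
      simp only [g3v, Prod.fst_add, Prod.snd_add, Pi.add_apply, mul_add, Finset.sum_add_distrib]
      ring)
    (fun t a b => by
      simp only [g3v, Prod.smul_fst, Prod.smul_snd, Pi.smul_apply, smul_eq_mul, mul_add,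
        Finset.mul_sum]
      ring_nf)

@[simp]
theorem g3vForm_apply (r : ℕ) (a b : V3 r) : g3vForm r a b = g3v r a b := rfl

def xCoord (r : ℕ) : V3 r →ₗ[ℝ] ℝ where
  toFun a := a.2.2.1
  map_add' _ _ := rfl
  map_smul' _ _ := rfl

@[simp]
theorem xCoord_apply (r : ℕ) (a : V3 r) : xCoord r a = a.2.2.1 := rfl

def basisY (r : ℕ) : V3 r := (0, 0, 0, 1)

theorem g3v_basisY_left (r : ℕ) (z : V3 r) : g3v r (basisY r) z = z.2.2.1 := by
  simp [g3v, basisY]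

theorem eq_of_forall_g3v_eq {r : ℕ} {a b : V3 r} (h : ∀ z, g3v r a z = g3v r b z) : a = b := by
  refine Prod.ext (funext fun j => ?_) (Prod.ext (funext fun j => ?_) (Prod.ext ?_ ?_))
  · simpa [g3v, Pi.single_apply] using h (0, Pi.single j 1, 0, 0)
  · simpa [g3v, Pi.single_apply] using h (Pi.single j 1, 0, 0, 0)
  · simpa [g3v] using h (0, 0, 0, 1)
  · simpa [g3v] using h (0, 0, 1, 0)

section S3Sharp

variable {n : ℕ}

theorem S3_succ (w z : V3 (n + 1)) :
    S3 (n + 1) w z = w.1 (Fin.last n) * z.1 (Fin.last n)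
      + ∑ i : Fin n, (w.1 i.castSucc * z.2.1 i.succ + w.2.1 i.succ * z.1 i.castSucc) := by
  rw [S3, dif_pos n.succ_pos, Fin.sum_univ_castSucc]
  simp [Fin.last, Fin.succ, Fin.castSucc]

variable (n) in
def S3Sharp : Module.End ℝ (V3 (n + 1)) where
  toFun w := (Fin.cons 0 fun i => w.1 i.castSucc,
    Fin.snoc (α := fun _ => ℝ) (fun i => w.2.1 i.succ) (w.1 (Fin.last n)), 0, 0)
  map_add' a b := by
    refine Prod.ext (funext fun j => ?_) (Prod.ext (funext fun j => ?_) (by simp))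
    · cases j using Fin.cases <;> simp
    · cases j using Fin.lastCases <;> simp
  map_smul' t a := by
    refine Prod.ext (funext fun j => ?_) (Prod.ext (funext fun j => ?_) (by simp))
    · cases j using Fin.cases <;> simp
    · cases j using Fin.lastCases <;> simp

theorem S3Sharp_apply (w : V3 (n + 1)) :
    S3Sharp n w = (Fin.cons 0 fun i => w.1 i.castSucc,
      Fin.snoc (α := fun _ => ℝ) (fun i => w.2.1 i.succ) (w.1 (Fin.last n)), 0, 0) := rfl

theorem g3v_S3Sharp_left (w z : V3 (n + 1)) : g3v (n + 1) (S3Sharp n w) z = S3 (n + 1) w z := by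
  have hu : ∑ i, (S3Sharp n w).1 i * z.2.1 i = ∑ i : Fin n, w.1 i.castSucc * z.2.1 i.succ := by
    simp [Fin.sum_univ_succ, S3Sharp_apply]
  have hv : ∑ i, (S3Sharp n w).2.1 i * z.1 i
      = ∑ i : Fin n, w.2.1 i.succ * z.1 i.castSucc + w.1 (Fin.last n) * z.1 (Fin.last n) := by
    simp [Fin.sum_univ_castSucc, S3Sharp_apply]
  rw [g3v, Finset.sum_add_distrib, hu, hv, S3_succ, Finset.sum_add_distrib]
  simp only [S3Sharp_apply, zero_mul, add_zero, zero_add]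
  ring

theorem S3Sharp_basisY : S3Sharp n (basisY (n + 1)) = 0 := by
  refine Prod.ext (funext fun j => ?_) (Prod.ext (funext fun j => ?_) rfl)
  · cases j using Fin.cases <;> simp [S3Sharp_apply, basisY]
  · cases j using Fin.lastCases <;> simp [S3Sharp_apply, basisY]

theorem fst_S3Sharp_pow_apply_of_lt (w : V3 (n + 1)) {k : ℕ} {j : Fin (n + 1)} (hj : j.val < k) :
    ((S3Sharp n ^ k) w).1 j = 0 := by
  induction k generalizing j with
  | zero => omega
  | succ k ih =>
    rw [pow_succ', Module.End.mul_apply]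
    cases j using Fin.cases with
    | zero => simp [S3Sharp_apply]
    | succ i => simpa [S3Sharp_apply] using ih (j := i.castSucc) (by simp at hj ⊢; omega)

theorem snd_fst_S3Sharp_pow_apply_of_lt (w : V3 (n + 1)) {k : ℕ} {j : Fin (n + 1)}
    (hj : n < j.val + k) : ((S3Sharp n ^ (n + 1 + k)) w).2.1 j = 0 := by
  induction k generalizing j with
  | zero => omega
  | succ k ih =>
    rw [← add_assoc, pow_succ', Module.End.mul_apply]
    cases j using Fin.lastCases with
    | last =>
      simpa [S3Sharp_apply] using fst_S3Sharp_pow_apply_of_lt w (j := Fin.last n) (by simp; omega)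
    | cast i => simpa [S3Sharp_apply] using ih (j := i.succ) (by simp at hj ⊢; omega)

theorem S3Sharp_pow_eq_zero : S3Sharp n ^ (2 * n + 2) = 0 := by
  refine LinearMap.ext fun w => Prod.ext (funext fun j => ?_) (Prod.ext (funext fun j => ?_) ?_)
  · exact fst_S3Sharp_pow_apply_of_lt w (by omega)
  · rw [show 2 * n + 2 = n + 1 + (n + 1) by ring]
    exact snd_fst_S3Sharp_pow_apply_of_lt w (by omega)
  · rw [pow_succ', Module.End.mul_apply]
    rfl

end S3Sharp

theorem jacobi_eq_of_g3v {n : ℕ} {ξ : V3 (n + 1)} {J : Module.End ℝ (V3 (n + 1))}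
    (hJ : ∀ y z, g3v (n + 1) (J y) z = A3 (n + 1) y ξ ξ z) :
    J = ξ.2.2.1 ^ 2 • S3Sharp n
      + ((-ξ.2.2.1 • (g3vForm (n + 1)).flip ξ) ∘ₗ S3Sharp n).smulRight (basisY (n + 1))
      + (xCoord (n + 1)).smulRight (S3 (n + 1) ξ ξ • basisY (n + 1) - ξ.2.2.1 • S3Sharp n ξ) := by
  refine LinearMap.ext fun y => eq_of_forall_g3v_eq fun z => ?_
  rw [hJ, ← g3vForm_apply]
  simp [g3v_S3Sharp_left, g3v_basisY_left, A3]
  ring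

/-- Theorem 1.6 (3), algebraic part: for every `ξ` the Jacobi operator `J(ξ)`, characterized by
`g(J(ξ)y, z) = A(y,ξ,ξ,z)`, satisfies `J(ξ)^{2r} = 0`. -/
theorem stmt10 (r : ℕ) (hr : 2 ≤ r) (ξ : V3 r) (J : Module.End ℝ (V3 r))
    (hJ : ∀ y z : V3 r, g3v r (J y) z = A3 r y ξ ξ z) :
    J ^ (2 * r) = 0 := by
  obtain ⟨n, rfl⟩ : ∃ n, r = n + 1 := ⟨r - 1, by omega⟩
  have hJ_eq := jacobi_eq_of_g3v hJ
  have hxJ : xCoord (n + 1) ∘ₗ J = 0 :=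
    LinearMap.ext fun y => by simp [hJ_eq, S3Sharp_apply, basisY]
  have hNw : (S3Sharp n ^ (2 * n + 1))
      (S3 (n + 1) ξ ξ • basisY (n + 1) - ξ.2.2.1 • S3Sharp n ξ) = 0 := by
    have hN := S3Sharp_pow_eq_zero (n := n)
    rw [pow_succ] at hN
    rw [map_sub, map_smul, map_smul, ← Module.End.mul_apply, hN, pow_succ, Module.End.mul_apply,
      S3Sharp_basisY]
    simp
  rw [show 2 * (n + 1) = 2 * n + 2 by ring]
  exact pow_eq_zero_of_eq_smul_add_smulRight hJ_eq hxJ S3Sharp_basisY S3Sharp_pow_eq_zero hNw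
end

section
/- With V = ℝ^{2r+2} and A as in the model 𝒰_{3,r} (nonzero components A(X,U_r,U_r,X) = 1, A(X,U_i,V_{i+1},X) = 1 for 1 ≤ i ≤ r-1), the Jacobi operator of the vector X satisfies J(X)^{2r-1}U_1 = ±V_1 ≠ 0; hence J(X) is nilpotent of order exactly 2r. -/
/-- Coordinates along the chain `U_1, …, U_r, V_r, …, V_1`, extended by zero: the
`U_{i+1}`-coordinate sits at position `i` and the `V_{i+1}`-coordinate at position `2r-1-i`. -/
def chainCoord {r : ℕ} (y : V3 r) (n : ℕ) : ℝ :=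
  if h : n < r then y.1 ⟨n, h⟩
  else if h' : n < 2 * r then y.2.1 ⟨2 * r - 1 - n, by omega⟩
  else 0

lemma V3.ext_chainCoord {r : ℕ} {y z : V3 r} (h : ∀ n, chainCoord y n = chainCoord z n)
    (h' : y.2.2 = z.2.2) : y = z := by
  refine Prod.ext (funext fun j => ?_) (Prod.ext (funext fun j => ?_) h')
  · simpa [chainCoord] using h j
  · have hj := j.isLt
    have := h (2 * r - 1 - j)
    simp only [chainCoord, dif_neg (show ¬ 2 * r - 1 - j < r by omega),
      dif_pos (show 2 * r - 1 - j < 2 * r by omega)] at this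
    convert this using 2 <;> exact Fin.ext (by simp only; omega)

lemma chainCoord_zero {r : ℕ} : chainCoord (0 : V3 r) = 0 := by
  funext n
  simp [chainCoord]

lemma chainCoord_single_u {r : ℕ} (i : Fin r) (n : ℕ) :
    chainCoord ((Pi.single i 1, 0, 0, 0) : V3 r) n = if n = i then 1 else 0 := by
  have := i.isLt
  simp only [chainCoord, Pi.single_apply, Fin.ext_iff, Pi.zero_apply]
  split_ifs <;> first | rfl | (exfalso; omega)

lemma chainCoord_single_v {r : ℕ} (i : Fin r) (n : ℕ) :
    chainCoord ((0, Pi.single i 1, 0, 0) : V3 r) n = if n = 2 * r - 1 - i then 1 else 0 := by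
  have := i.isLt
  simp only [chainCoord, Pi.single_apply, Fin.ext_iff, Pi.zero_apply]
  split_ifs <;> first | rfl | (exfalso; omega)

lemma g3v_single_u {r : ℕ} (a : V3 r) (j : Fin r) :
    g3v r a (Pi.single j 1, 0, 0, 0) = a.2.1 j := by
  simp [g3v, Pi.single_apply]

lemma g3v_single_v {r : ℕ} (a : V3 r) (j : Fin r) :
    g3v r a (0, Pi.single j 1, 0, 0) = a.1 j := by
  simp [g3v, Pi.single_apply]

lemma g3v_X {r : ℕ} (a : V3 r) : g3v r a (0, 0, 1, 0) = a.2.2.2 := by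
  simp [g3v]

lemma g3v_Y {r : ℕ} (a : V3 r) : g3v r a (0, 0, 0, 1) = a.2.2.1 := by
  simp [g3v]

lemma S3_mk_zero_zero {r : ℕ} (y : V3 r) (x w : ℝ) : S3 r y (0, 0, x, w) = 0 := by
  simp [S3]

lemma A3_X_X {r : ℕ} (y z : V3 r) : A3 r y (0, 0, 1, 0) (0, 0, 1, 0) z = S3 r y z := by
  simp [A3, S3]

lemma S3_single_u {r : ℕ} (y : V3 r) (j : Fin r) :
    S3 r y (Pi.single j 1, 0, 0, 0) = chainCoord y (2 * r - 2 - j) := by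
  have hj := j.isLt
  simp only [S3, chainCoord, Pi.single_apply, Fin.ext_iff, Pi.zero_apply, mul_zero, mul_ite,
    mul_one, zero_add]
  rw [Finset.sum_eq_single j (fun i _ hi => by simp [Fin.val_ne_of_ne hi]) (by simp)]
  split_ifs <;> first | omega | simp only [add_zero, zero_add]
  all_goals exact congrArg _ (Fin.ext (by simp only; omega))

lemma S3_single_v {r : ℕ} (y : V3 r) (j : Fin r) :
    S3 r y (0, Pi.single j 1, 0, 0) = if 0 < j.1 then chainCoord y (j - 1) else 0 := by
  have hj := j.isLt
  simp only [S3, Pi.single_apply, Fin.ext_iff, Pi.zero_apply, mul_zero, mul_ite, mul_one,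
    zero_add, add_zero, dite_eq_ite, ite_self]
  by_cases h0 : 0 < j.1
  · rw [if_pos h0, chainCoord, dif_pos (by omega), Finset.sum_eq_single ⟨j - 1, by omega⟩
      (fun i _ hi => by simp [Fin.ext_iff] at hi ⊢; omega) (by simp)]
    simp only [if_pos (show j.1 - 1 + 1 < r by omega), if_pos (show j.1 - 1 + 1 = j by omega)]
  · rw [if_neg h0]
    exact Finset.sum_eq_zero fun i _ => by simp; omega

def IsJacobiOperator (r : ℕ) (ξ : V3 r) (J : Module.End ℝ (V3 r)) : Prop :=
  ∀ y z : V3 r, g3v r (J y) z = A3 r y ξ ξ z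

section JacobiX

variable {r : ℕ} {J : Module.End ℝ (V3 r)}

lemma IsJacobiOperator.snd_snd (hJ : IsJacobiOperator r (0, 0, 1, 0) J) (y : V3 r) :
    (J y).2.2 = 0 := by
  ext
  · rw [← g3v_Y, hJ, A3_X_X, S3_mk_zero_zero]; rfl
  · rw [← g3v_X, hJ, A3_X_X, S3_mk_zero_zero]; rfl

lemma IsJacobiOperator.chainCoord_apply (hJ : IsJacobiOperator r (0, 0, 1, 0) J) (y : V3 r)
    (n : ℕ) : chainCoord (J y) n = if 0 < n ∧ n < 2 * r then chainCoord y (n - 1) else 0 := by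
  by_cases hn : n < r
  · rw [chainCoord, dif_pos hn, ← g3v_single_v, hJ, A3_X_X, S3_single_v]
    simp only [show n < 2 * r by omega, and_true]
  by_cases hn' : n < 2 * r
  · have h2 : 2 * r - 2 - (2 * r - 1 - n) = n - 1 := by omega
    rw [chainCoord, dif_neg hn, dif_pos hn', ← g3v_single_u, hJ, A3_X_X, S3_single_u]
    simp only [h2, if_pos (show 0 < n ∧ n < 2 * r by omega)]
  · simp [chainCoord, hn, hn']

lemma IsJacobiOperator.chainCoord_pow_apply (hJ : IsJacobiOperator r (0, 0, 1, 0) J) (k : ℕ)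
    (y : V3 r) (n : ℕ) :
    chainCoord ((J ^ k) y) n = if k ≤ n ∧ n < 2 * r then chainCoord y (n - k) else 0 := by
  induction k generalizing n with
  | zero =>
    by_cases hn : n < 2 * r
    · simp [hn]
    · rw [if_neg (by omega), chainCoord, dif_neg (by omega), dif_neg hn]
  | succ k ih =>
    rw [pow_succ', Module.End.mul_apply, hJ.chainCoord_apply, ih]
    split_ifs <;> first | rfl | (congr 1; omega)

lemma IsJacobiOperator.pow_apply_snd_snd (hJ : IsJacobiOperator r (0, 0, 1, 0) J) {k : ℕ}
    (hk : k ≠ 0) (y : V3 r) : ((J ^ k) y).2.2 = 0 := by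
  obtain ⟨k, rfl⟩ := Nat.exists_eq_succ_of_ne_zero hk
  rw [pow_succ', Module.End.mul_apply, hJ.snd_snd]

lemma IsJacobiOperator.pow_two_mul_eq_zero (hJ : IsJacobiOperator r (0, 0, 1, 0) J)
    (hr : 0 < r) : J ^ (2 * r) = 0 := by
  refine LinearMap.ext fun y => ?_
  refine V3.ext_chainCoord (fun n => ?_) (hJ.pow_apply_snd_snd (by omega) y)
  rw [hJ.chainCoord_pow_apply, LinearMap.zero_apply, chainCoord_zero, Pi.zero_apply,
    if_neg (by omega)]

lemma IsJacobiOperator.pow_apply_single_u (hJ : IsJacobiOperator r (0, 0, 1, 0) J) (hr : 0 < r) :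
    (J ^ (2 * r - 1)) (Pi.single ⟨0, hr⟩ 1, 0, 0, 0) = (0, Pi.single ⟨0, hr⟩ 1, 0, 0) := by
  refine V3.ext_chainCoord (fun n => ?_) (hJ.pow_apply_snd_snd (by omega) _)
  rw [hJ.chainCoord_pow_apply, chainCoord_single_u, chainCoord_single_v]
  dsimp only
  split_ifs <;> first | rfl | (exfalso; omega)

end JacobiX

/-- Theorem 1.6 (3), sharpness: the Jacobi operator of the vector `X` satisfies
`J(X)^{2r-1} U₁ = ± V₁ ≠ 0`, so `J(X)` is nilpotent of order exactly `2r`. -/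
theorem stmt11 (r : ℕ) (hr : 2 ≤ r) (J : Module.End ℝ (V3 r))
    (hJ : ∀ y z : V3 r, g3v r (J y) z = A3 r y ((0, 0, 1, 0) : V3 r) ((0, 0, 1, 0) : V3 r) z) :
    ((J ^ (2 * r - 1)) ((Pi.single (⟨0, by omega⟩ : Fin r) 1, 0, 0, 0) : V3 r)
        = ((0, Pi.single (⟨0, by omega⟩ : Fin r) 1, 0, 0) : V3 r) ∨
     (J ^ (2 * r - 1)) ((Pi.single (⟨0, by omega⟩ : Fin r) 1, 0, 0, 0) : V3 r)
        = -((0, Pi.single (⟨0, by omega⟩ : Fin r) 1, 0, 0) : V3 r)) ∧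
    (J ^ (2 * r - 1)) ((Pi.single (⟨0, by omega⟩ : Fin r) 1, 0, 0, 0) : V3 r) ≠ 0 ∧
    J ^ (2 * r) = 0 := by
  have hJX : IsJacobiOperator r (0, 0, 1, 0) J := hJ
  have hchain := hJX.pow_apply_single_u (by omega)
  refine ⟨Or.inl hchain, ?_, hJX.pow_two_mul_eq_zero (by omega)⟩
  rw [hchain]
  simp
end

section
/- The model 𝒰_{3,r} = (ℝ^{2r+2}, g, A) is irreducible: there is no orthogonal direct sum decomposition ℝ^{2r+2} = W₁ ⊕ W₂ with both W₁ and W₂ nonzero and non-degenerate for g, such that A vanishes whenever its arguments mix W₁ and W₂. -/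
/-! Writing `X = ξ₁ + ξ₂` along `W₁ ⊕ W₂`, one summand, say `ξ₁`, has nonzero `X`-coordinate.
Since `A` is built from `S` and the covector `x`, the mixed components `A(ξ₁, U_r, w, U_r)` and
`A(ξ₁, w, X, ·)` are `-ξ₁.x * w.x` and `-ξ₁.x * S(w, ·)` once `w.x = 0`, for every `w ∈ W₂`.
As `S(w, ·)` reads off all `U`-coordinates of `w`, all of `W₂` lies in the totally isotropic span
of `Y, V_1, …, V_r`, which contradicts `W₂` being nonzero and non-degenerate. -/

namespace V3

variable {r : ℕ}

def basisU (i : Fin r) : V3 r := (Pi.single i 1, 0, 0, 0)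

def basisV (i : Fin r) : V3 r := (0, Pi.single i 1, 0, 0)

def basisX (r : ℕ) : V3 r := (0, 0, 1, 0)

end V3

open V3

section Curvature

variable {r : ℕ}

lemma S3_comm (b c : V3 r) : S3 r b c = S3 r c b := by
  unfold S3
  congr 1
  · split <;> ring
  · exact Finset.sum_congr rfl fun i _ => by split <;> ring

lemma S3_basisX_right (b : V3 r) : S3 r b (basisX r) = 0 := by
  rw [S3_comm]
  simp [S3, basisX]

lemma S3_basisU_right (b : V3 r) (i : Fin r) (hi : i.1 + 1 = r) :
    S3 r b (basisU i) = b.1 i := by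
  have hr : 0 < r := by omega
  obtain rfl : i = ⟨r - 1, Nat.sub_lt hr Nat.one_pos⟩ := Fin.ext (by dsimp only; omega)
  rw [S3, dif_pos hr, Finset.sum_eq_zero]
  · simp [basisU]
  · intro j _
    split_ifs with hj
    · have hji : j ≠ ⟨r - 1, Nat.sub_lt hr Nat.one_pos⟩ :=
        Fin.ne_of_val_ne (by dsimp only; omega)
      simp [basisU, hji]
    · rfl

lemma S3_basisV_succ_right (b : V3 r) (i : Fin r) (hi : i.1 + 1 < r) :
    S3 r b (basisV ⟨i.1 + 1, hi⟩) = b.1 i := by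
  rw [S3, dif_pos (by omega), Finset.sum_eq_single i]
  · simp [basisV, dif_pos hi]
  · intro j _ hj
    split_ifs with hj'
    · have hji : (⟨j.1 + 1, hj'⟩ : Fin r) ≠ ⟨i.1 + 1, hi⟩ := fun h =>
        hj (Fin.ext (by have := Fin.mk.inj h; omega))
      simp [basisV, hji]
    · rfl
  · simp

lemma fst_eq_zero_of_S3_eq_zero {w : V3 r} (hw : ∀ ζ, S3 r w ζ = 0) : w.1 = 0 := by
  funext i
  by_cases hi : i.1 + 1 < r
  · rw [← S3_basisV_succ_right w i hi, hw]; rfl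
  · rw [← S3_basisU_right w i (by omega), hw]; rfl

lemma A3_antisymm_left (a b c d : V3 r) : A3 r b a c d = -A3 r a b c d := by
  unfold A3; ring

lemma A3_pair_comm (a b c d : V3 r) : A3 r c d a b = A3 r a b c d := by
  unfold A3
  rw [S3_comm d a, S3_comm d b, S3_comm c a, S3_comm c b]
  ring

lemma A3_basisU_basisU (a b : V3 r) (i : Fin r) (hi : i.1 + 1 = r) :
    A3 r a (basisU i) b (basisU i) = -(a.2.2.1 * b.2.2.1) := by
  have hUU : S3 r (basisU i) (basisU i) = 1 := by
    rw [S3_basisU_right _ i hi]; simp [basisU]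
  simp only [A3, hUU]
  simp [basisU]

lemma A3_basisX (a b ζ : V3 r) :
    A3 r a b (basisX r) ζ = S3 r a ζ * b.2.2.1 - S3 r b ζ * a.2.2.1 := by
  simp only [A3, S3_basisX_right]
  simp only [basisX]
  ring

end Curvature

lemma g3v_eq_zero_of_x_eq_zero_of_fst_eq_zero {r : ℕ} {a b : V3 r}
    (hax : a.2.2.1 = 0) (hau : a.1 = 0) (hbx : b.2.2.1 = 0) (hbu : b.1 = 0) :
    g3v r a b = 0 := by
  simp [g3v, hax, hau, hbx, hbu]

theorem eq_bot_of_A3_eq_zero {r : ℕ} (hr : 0 < r) {W : Submodule ℝ (V3 r)}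
    (hW : ∀ w ∈ W, (∀ w' ∈ W, g3v r w w' = 0) → w = 0) {ξ : V3 r}
    (hξ : ξ.2.2.1 ≠ 0)
    (hA : ∀ w ∈ W, ∀ η ζ : V3 r, A3 r ξ w η ζ = 0 ∧ A3 r ξ η w ζ = 0) : W = ⊥ := by
  let last : Fin r := ⟨r - 1, Nat.sub_lt hr Nat.one_pos⟩
  have hx : ∀ w ∈ W, w.2.2.1 = 0 := fun w hw => by
    have h := (hA w hw (basisU last) (basisU last)).2
    rw [A3_basisU_basisU ξ w last (by dsimp only [last]; omega), neg_eq_zero] at h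
    exact (mul_eq_zero.mp h).resolve_left hξ
  have hu : ∀ w ∈ W, w.1 = 0 := fun w hw => fst_eq_zero_of_S3_eq_zero fun ζ => by
    have h := (hA w hw (basisX r) ζ).1
    rw [A3_basisX, hx w hw, mul_zero, zero_sub, neg_eq_zero] at h
    exact (mul_eq_zero.mp h).resolve_right hξ
  refine (Submodule.eq_bot_iff W).mpr fun w hw => hW w hw fun w' hw' => ?_
  exact g3v_eq_zero_of_x_eq_zero_of_fst_eq_zero (hx w hw) (hu w hw) (hx w' hw') (hu w' hw')

/-- Theorem 1.5 (4), irreducibility of the model `𝒰_{3,r}`: there is no `g`-orthogonal direct sum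
decomposition `ℝ^{2r+2} = W₁ ⊕ W₂` with both summands nonzero and non-degenerate for `g` such that
`A` vanishes whenever its arguments mix `W₁` and `W₂`. -/
theorem stmt12 (r : ℕ) (hr : 2 ≤ r) :
    ¬ ∃ W₁ W₂ : Submodule ℝ (V3 r), W₁ ≠ ⊥ ∧ W₂ ≠ ⊥ ∧ IsCompl W₁ W₂ ∧
      (∀ w₁ ∈ W₁, ∀ w₂ ∈ W₂, g3v r w₁ w₂ = 0) ∧
      (∀ w ∈ W₁, (∀ w' ∈ W₁, g3v r w w' = 0) → w = 0) ∧
      (∀ w ∈ W₂, (∀ w' ∈ W₂, g3v r w w' = 0) → w = 0) ∧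
      (∀ ξ₁ ∈ W₁, ∀ ξ₂ ∈ W₂, ∀ η ζ : V3 r,
        A3 r ξ₁ ξ₂ η ζ = 0 ∧ A3 r ξ₁ η ξ₂ ζ = 0 ∧ A3 r ξ₁ η ζ ξ₂ = 0) := by
  rintro ⟨W₁, W₂, hW₁, hW₂, hcompl, -, hnd₁, hnd₂, hA⟩
  have hr : 0 < r := by omega
  have hX : basisX r ∈ W₁ ⊔ W₂ := hcompl.sup_eq_top ▸ Submodule.mem_top
  obtain ⟨ξ₁, hξ₁, ξ₂, hξ₂, hsum⟩ := Submodule.mem_sup.mp hX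
  have hx : ξ₁.2.2.1 + ξ₂.2.2.1 = 1 := congrArg (fun v : V3 r => v.2.2.1) hsum
  rcases eq_or_ne ξ₁.2.2.1 0 with h₁ | h₁
  · refine hW₁ (eq_bot_of_A3_eq_zero hr hnd₁ (ξ := ξ₂) (by linarith) fun w hw η ζ =>
      ⟨?_, ?_⟩)
    · rw [A3_antisymm_left, (hA w hw ξ₂ hξ₂ η ζ).1, neg_zero]
    · rw [← A3_pair_comm, (hA w hw ξ₂ hξ₂ ζ η).2.1]
  · exact hW₂ (eq_bot_of_A3_eq_zero hr hnd₂ h₁ fun w hw η ζ =>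
      ⟨(hA ξ₁ hξ₁ w hw η ζ).1, (hA ξ₁ hξ₁ w hw η ζ).2.1⟩)
end

section
/- Let ℝ^{3s} (s ≥ 3) have the inner product g(u_i,v_j)=δ_{ij}, g(t_i,t_j)=-δ_{ij} and curvature tensor A with nonzero components A(u_i,u_j,u_k,t_l)=δ_{il}δ_{jk}-δ_{ik}δ_{jl}. If B̃ = {ũ_i, t̃_i, ṽ_i} is another basis satisfying the same normalizations, then there exist κ₁ ∈ O(s) and matrices κ₂, κ₃, κ₅ ∈ M_s(ℝ) such that ũ_i = Σ_j(κ₁_{ij}u_j + κ₂_{ij}t_j + κ₃_{ij}v_j), t̃_i = Σ_j(κ₁_{ij}t_j + κ₅_{ij}v_j), and ṽ_i = Σ_j κ₁_{ij}v_j. -/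
/-- `ℝ^{3s}` with coordinates `(u, t, v)`: for `a : V2 s`, `a.1` are the `u`-coordinates,
`a.2.1` the `t`-coordinates and `a.2.2` the `v`-coordinates. -/
abbrev V2 (s : ℕ) := (Fin s → ℝ) × (Fin s → ℝ) × (Fin s → ℝ)

/-- The inner product of `𝒰_{2,s}`: `g(u_i,v_j) = δ_{ij}`, `g(t_i,t_j) = -δ_{ij}`. -/
def g2 {s : ℕ} (a b : V2 s) : ℝ := dotp a.1 b.2.2 + dotp a.2.2 b.1 - dotp a.2.1 b.2.1

/-- The multilinear extension (respecting the curvature symmetries) of the algebraic curvature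
tensor whose only nonzero components up to the `ℤ₂` symmetries are
`A(u_i,u_j,u_k,t_l) = δ_{il}δ_{jk} - δ_{ik}δ_{jl}`. -/
def A2 {s : ℕ} (a b c d : V2 s) : ℝ :=
    (dotp a.1 d.2.1 * dotp b.1 c.1 - dotp a.1 c.1 * dotp b.1 d.2.1)
  - (dotp a.1 c.2.1 * dotp b.1 d.1 - dotp a.1 d.1 * dotp b.1 c.2.1)
  + (dotp c.1 b.2.1 * dotp d.1 a.1 - dotp c.1 a.1 * dotp d.1 b.2.1)
  - (dotp c.1 a.2.1 * dotp d.1 b.1 - dotp c.1 b.1 * dotp d.1 a.2.1)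

/-!
The radical `{x | A(x, ·, ·, ·) = 0}` of `A` is `span {v_i}`, and `Φ`
preserves it, so each `ṽ_i` lies in `span {v_j}`; pairing `t̃_i` with `Φ⁻¹ v_j`, which lies in the
radical as well, shows that `t̃_i` has no `u`-component. Let `P`, `Y`, `E` be the matrices of the
`u`-components of `ũ`, the `t`-components of `t̃` and the `v`-components of `ṽ`. Then `g` gives
`Y Yᵀ = 1` and `P Eᵀ = 1`, and `A(ũ_i, ũ_j, ũ_k, t̃_l)` gives, for `M = P Yᵀ` and `N = P Pᵀ = M Mᵀ`,
`M_il N_jk - N_ik M_jl = δ_il δ_jk - δ_ik δ_jl`. As `s ≥ 3`, any two indices can be avoided by a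
third one, and this makes `M` and `N` diagonal, after which `M_ll N_kk = 1` and `N_kk = M_kk²` force
`M = N = 1`. Hence `P = Y` is orthogonal and `E = P`.
-/

open Matrix

lemma dotp_eq_dotProduct {s : ℕ} (x y : Fin s → ℝ) : dotp x y = x ⬝ᵥ y := rfl

lemma mul_transpose_apply_eq_dotProduct {m n k R : Type*} [Fintype n] [Mul R] [AddCommMonoid R]
    (M : Matrix m n R) (N : Matrix k n R) (i : m) (j : k) : (M * Nᵀ) i j = M i ⬝ᵥ N j :=
  rfl

lemma eq_one_of_mul_sq_eq_one {R : Type*} [Field R] [LinearOrder R] [IsStrictOrderedRing R]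
    {a b : R} (hab : a * b ^ 2 = 1) (hba : b * a ^ 2 = 1) : a = 1 := by
  have hab0 : a * b ≠ 0 := by
    rintro h
    simp [show a * b ^ 2 = a * b * b by ring, h] at hab
  have hb : b = a := by
    have : a * b * (b - a) = 0 := by linear_combination hab - hba
    linarith [(mul_eq_zero.mp this).resolve_left hab0]
  subst hb
  nlinarith [sq_nonneg (b - 1), sq_nonneg (b + 1)]

section CurvatureForm

variable {n R : Type*} [DecidableEq n]

/-- With `M i l = g(ũ_i, t̃_l)` and `N j k = g(ũ_j, ũ_k)`, this is `A(ũ_i, ũ_j, ũ_k, t̃_l)`. -/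
def curvatureForm [CommRing R] (M N : Matrix n n R) (i j k l : n) : R :=
  M i l * N j k - N i k * M j l

lemma offDiag_eq_zero_of_curvatureForm_eq [CommRing R] {M N : Matrix n n R}
    (h : curvatureForm M N = curvatureForm 1 1) {i k l : n}
    (hil : i ≠ l) (hik : i ≠ k) (hkl : k ≠ l) : M i l = 0 ∧ N i k = 0 := by
  have h0 : ∀ q, M i l * N q k - N i k * M q l = 0 := fun q => by
    simpa [curvatureForm, one_apply, hil, hik] using congrFun (congrFun₃ h i q k) l
  have h1 : M l l * N k k - N l k * M k l = 1 := by
    simpa [curvatureForm, one_apply, hkl, hkl.symm] using congrFun (congrFun₃ h l k k) l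
  constructor
  · linear_combination (-M i l) * h1 + M l l * h0 k - M k l * h0 l
  · linear_combination (-N i k) * h1 + N l k * h0 k - N k k * h0 l

lemma eq_one_of_curvatureForm_eq [Fintype n] [Field R] [LinearOrder R] [IsStrictOrderedRing R]
    (hn : 3 ≤ Fintype.card n) {M N : Matrix n n R} (hN : N = M * Mᵀ)
    (h : curvatureForm M N = curvatureForm 1 1) : M = 1 ∧ N = 1 := by
  have third : ∀ i l : n, ∃ k, k ≠ i ∧ k ≠ l :=
    ENat.exists_ne_ne_of_three_le (by simpa using hn)
  have hM0 : ∀ i l, i ≠ l → M i l = 0 := fun i l hil => by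
    obtain ⟨k, hki, hkl⟩ := third i l
    exact (offDiag_eq_zero_of_curvatureForm_eq h hil hki.symm hkl).1
  have hN0 : ∀ i k, i ≠ k → N i k = 0 := fun i k hik => by
    obtain ⟨l, hli, hlk⟩ := third i k
    exact (offDiag_eq_zero_of_curvatureForm_eq h hli.symm hik hlk.symm).2
  have hNd : ∀ k, N k k = M k k ^ 2 := fun k => by
    rw [hN, mul_apply, Finset.sum_eq_single k (fun m _ hm => by simp [hM0 k m hm.symm]) (by simp)]
    simp [sq]
  have hdiag : ∀ l k, l ≠ k → M l l * M k k ^ 2 = 1 := fun l k hlk => by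
    have := congrFun (congrFun₃ h l k k) l
    simpa [curvatureForm, one_apply, hlk, hlk.symm, hN0 l k hlk, ← hNd] using this
  have hMd : ∀ l, M l l = 1 := fun l => by
    obtain ⟨k, hkl, -⟩ := third l l
    exact eq_one_of_mul_sq_eq_one (hdiag l k hkl.symm) (hdiag k l hkl)
  have hM : M = 1 := by
    ext i j
    by_cases hij : i = j
    · subst hij; simp [hMd]
    · simp [hij, hM0 i j hij]
  exact ⟨hM, by simp [hN, hM]⟩

end CurvatureForm

lemma forall_map_eq_zero_iff {α β : Type*} [Zero β] {f : α → α → α → α → β} {Φ : α → α}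
    (hΦ : Function.Surjective Φ) (hf : ∀ a b c d, f (Φ a) (Φ b) (Φ c) (Φ d) = f a b c d)
    (x : α) : (∀ b c d, f (Φ x) b c d = 0) ↔ ∀ b c d, f x b c d = 0 := by
  refine ⟨fun h b c d => hf x b c d ▸ h _ _ _, fun h b c d => ?_⟩
  obtain ⟨b, rfl⟩ := hΦ b
  obtain ⟨c, rfl⟩ := hΦ c
  obtain ⟨d, rfl⟩ := hΦ d
  rw [hf, h]

section NormalizedBasis

variable {s : ℕ}

lemma A2_eq_zero_of_fst_snd {x : V2 s} (h₁ : x.1 = 0) (h₂ : x.2.1 = 0) (b c d : V2 s) :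
    A2 x b c d = 0 := by
  simp [A2, dotp_eq_dotProduct, h₁, h₂]

lemma A2_of_fst_eq_zero {a b c d : V2 s} (hd : d.1 = 0) :
    A2 a b c d = dotp a.1 d.2.1 * dotp b.1 c.1 - dotp a.1 c.1 * dotp b.1 d.2.1 := by
  simp [A2, dotp_eq_dotProduct, hd]

lemma forall_A2_eq_zero_iff (hs : 2 ≤ s) (x : V2 s) :
    (∀ b c d, A2 x b c d = 0) ↔ x.1 = 0 ∧ x.2.1 = 0 := by
  refine ⟨fun hx => ?_, fun h => A2_eq_zero_of_fst_snd h.1 h.2⟩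
  have : Nontrivial (Fin s) := Fin.nontrivial_iff_two_le.mpr hs
  have hx₁ : x.1 = 0 := funext fun l => by
    obtain ⟨j, hj⟩ := exists_ne l
    simpa [A2, dotp_eq_dotProduct, hj] using
      hx (Pi.single j 1, 0, 0) (Pi.single j 1, 0, 0) (0, Pi.single l 1, 0)
  refine ⟨hx₁, funext fun k => ?_⟩
  obtain ⟨j, hj⟩ := exists_ne k
  simpa [A2, dotp_eq_dotProduct, hx₁, hj] using
    hx (Pi.single j 1, 0, 0) (Pi.single k 1, 0, 0) (Pi.single j 1, 0, 0)

def uVec (i : Fin s) : V2 s := (Pi.single i 1, 0, 0)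
def tVec (i : Fin s) : V2 s := (0, Pi.single i 1, 0)
def vVec (i : Fin s) : V2 s := (0, 0, Pi.single i 1)

def uBlock (w : Fin s → V2 s) : Matrix (Fin s) (Fin s) ℝ := of fun i => (w i).1
def tBlock (w : Fin s → V2 s) : Matrix (Fin s) (Fin s) ℝ := of fun i => (w i).2.1
def vBlock (w : Fin s → V2 s) : Matrix (Fin s) (Fin s) ℝ := of fun i => (w i).2.2

@[simp] lemma uBlock_row (w : Fin s → V2 s) (i : Fin s) : uBlock w i = (w i).1 := rfl
@[simp] lemma tBlock_row (w : Fin s → V2 s) (i : Fin s) : tBlock w i = (w i).2.1 := rfl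
@[simp] lemma vBlock_row (w : Fin s → V2 s) (i : Fin s) : vBlock w i = (w i).2.2 := rfl

variable {Φ : V2 s → V2 s}

lemma map_fst_snd_eq_zero_iff (hs : 2 ≤ s) (hΦ : Function.Surjective Φ)
    (hA : ∀ a b c d, A2 (Φ a) (Φ b) (Φ c) (Φ d) = A2 a b c d) (x : V2 s) :
    (Φ x).1 = 0 ∧ (Φ x).2.1 = 0 ↔ x.1 = 0 ∧ x.2.1 = 0 := by
  rw [← forall_A2_eq_zero_iff hs, forall_map_eq_zero_iff hΦ hA, forall_A2_eq_zero_iff hs]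

lemma map_tVec_fst (hs : 2 ≤ s) (hΦ : Function.Surjective Φ)
    (hg : ∀ a b, g2 (Φ a) (Φ b) = g2 a b)
    (hA : ∀ a b c d, A2 (Φ a) (Φ b) (Φ c) (Φ d) = A2 a b c d) (i : Fin s) :
    (Φ (tVec i)).1 = 0 := funext fun j => by
  obtain ⟨x, hx⟩ := hΦ (vVec j)
  have hx₂ : x.2.1 = 0 := ((map_fst_snd_eq_zero_iff hs hΦ hA x).mp (hx ▸ ⟨rfl, rfl⟩)).2
  simpa [g2, dotp_eq_dotProduct, hx, hx₂, tVec, vVec] using hg (tVec i) x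

lemma tBlock_mul_transpose (hs : 2 ≤ s) (hΦ : Function.Surjective Φ)
    (hg : ∀ a b, g2 (Φ a) (Φ b) = g2 a b)
    (hA : ∀ a b c d, A2 (Φ a) (Φ b) (Φ c) (Φ d) = A2 a b c d) :
    tBlock (Φ ∘ tVec) * (tBlock (Φ ∘ tVec))ᵀ = 1 := by
  ext i j
  have h := hg (tVec i) (tVec j)
  simp only [g2, map_tVec_fst hs hΦ hg hA, dotp_eq_dotProduct, zero_dotProduct,
    dotProduct_zero] at h
  simp [mul_transpose_apply_eq_dotProduct, tVec, Pi.single_apply, one_apply, @eq_comm _ j i]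
    at h ⊢
  linarith

lemma uBlock_mul_vBlock_transpose (hs : 2 ≤ s) (hΦ : Function.Surjective Φ)
    (hg : ∀ a b, g2 (Φ a) (Φ b) = g2 a b)
    (hA : ∀ a b c d, A2 (Φ a) (Φ b) (Φ c) (Φ d) = A2 a b c d) :
    uBlock (Φ ∘ uVec) * (vBlock (Φ ∘ vVec))ᵀ = 1 := by
  ext i j
  obtain ⟨hv₁, hv₂⟩ := (map_fst_snd_eq_zero_iff hs hΦ hA (vVec j)).mpr ⟨rfl, rfl⟩
  have h := hg (uVec i) (vVec j)
  simp only [g2, hv₁, hv₂, dotp_eq_dotProduct, dotProduct_zero] at h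
  simp [mul_transpose_apply_eq_dotProduct, uVec, vVec, Pi.single_apply, one_apply,
    @eq_comm _ j i] at h ⊢
  linarith

lemma curvatureForm_uBlock_tBlock (hs : 2 ≤ s) (hΦ : Function.Surjective Φ)
    (hg : ∀ a b, g2 (Φ a) (Φ b) = g2 a b)
    (hA : ∀ a b c d, A2 (Φ a) (Φ b) (Φ c) (Φ d) = A2 a b c d) :
    curvatureForm (uBlock (Φ ∘ uVec) * (tBlock (Φ ∘ tVec))ᵀ)
      (uBlock (Φ ∘ uVec) * (uBlock (Φ ∘ uVec))ᵀ) = curvatureForm 1 1 := by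
  ext i j k l
  have h := hA (uVec i) (uVec j) (uVec k) (tVec l)
  rw [A2_of_fst_eq_zero (map_tVec_fst hs hΦ hg hA l), A2_of_fst_eq_zero rfl] at h
  simp only [curvatureForm, mul_transpose_apply_eq_dotProduct, uBlock_row, tBlock_row,
    Function.comp_apply, ← dotp_eq_dotProduct, h]
  simp only [uVec, tVec, dotp_eq_dotProduct, single_dotProduct, one_mul, one_apply,
    Pi.single_apply]

end NormalizedBasis

/-- Lemma 5.2: any normalized basis `{ũ_i, t̃_i, ṽ_i}` of `𝒰_{2,s}` (i.e. a basis whose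
change-of-basis map `Φ` preserves both `g` and `A`) is obtained from the standard one by
`κ₁ ∈ O(s)` and matrices `κ₂, κ₃, κ₅`. -/
theorem stmt17 (s : ℕ) (hs : 3 ≤ s)
    (ut tt vt : Fin s → V2 s) (Φ : V2 s → V2 s)
    (hΦ : ∀ a : V2 s,
      Φ a = (∑ i, a.1 i • ut i) + (∑ i, a.2.1 i • tt i) + (∑ i, a.2.2 i • vt i))
    (hbij : Function.Bijective Φ)
    (hg : ∀ a b : V2 s, g2 (Φ a) (Φ b) = g2 a b)
    (hA : ∀ a b c d : V2 s, A2 (Φ a) (Φ b) (Φ c) (Φ d) = A2 a b c d) :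
    ∃ κ₁ κ₂ κ₃ κ₅ : Matrix (Fin s) (Fin s) ℝ,
      κ₁ * κ₁.transpose = 1 ∧ κ₁.transpose * κ₁ = 1 ∧
      (∀ i, ut i = ((fun j => κ₁ i j), (fun j => κ₂ i j), (fun j => κ₃ i j))) ∧
      (∀ i, tt i = (0, (fun j => κ₁ i j), (fun j => κ₅ i j))) ∧
      (∀ i, vt i = (0, 0, (fun j => κ₁ i j))) := by
  obtain ⟨rfl, rfl, rfl⟩ : ut = Φ ∘ uVec ∧ tt = Φ ∘ tVec ∧ vt = Φ ∘ vVec :=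
    ⟨funext fun i => by simp [hΦ, uVec], funext fun i => by simp [hΦ, tVec],
      funext fun i => by simp [hΦ, vVec]⟩
  have hs₂ : 2 ≤ s := by omega
  set U := uBlock (Φ ∘ uVec)
  set T := tBlock (Φ ∘ tVec)
  have hT : Tᵀ * T = 1 := mul_eq_one_comm.mp (tBlock_mul_transpose hs₂ hbij.2 hg hA)
  obtain ⟨hUT, hU⟩ := eq_one_of_curvatureForm_eq (by simpa using hs)
    (by rw [transpose_mul, transpose_transpose, Matrix.mul_assoc, ← Matrix.mul_assoc Tᵀ, hT,
      Matrix.one_mul]) (curvatureForm_uBlock_tBlock hs₂ hbij.2 hg hA)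
  have hU' : Uᵀ * U = 1 := mul_eq_one_comm.mp hU
  have hTU : T = U := (left_inv_eq_right_inv hUT hT).symm
  have hVU : vBlock (Φ ∘ vVec) = U := transpose_inj.mp
    (left_inv_eq_right_inv hU' (uBlock_mul_vBlock_transpose hs₂ hbij.2 hg hA)).symm
  refine ⟨U, tBlock (Φ ∘ uVec), vBlock (Φ ∘ uVec), vBlock (Φ ∘ tVec), hU, hU', fun i => rfl,
    fun i => ?_, fun i => ?_⟩
  · rw [← hTU]
    exact Prod.ext (map_tVec_fst hs₂ hbij.2 hg hA i) rfl
  · rw [← hVU]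
    obtain ⟨h₁, h₂⟩ := (map_fst_snd_eq_zero_iff hs₂ hbij.2 hA (vVec i)).mpr ⟨rfl, rfl⟩
    exact Prod.ext h₁ (Prod.ext h₂ rfl)
end
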